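/- arXiv:1805.10657 — 6 statements merged into one kernel-verified Lean document; each statement's English description precedes it below -/
import Mathlib

section
/- If a graph G has arboricity at most α, then the iterative process in which in each round all vertices with at most 3α currently-active neighbors become inactive, starting from all vertices active, terminates with all vertices inactive within O(log n) rounds. -/
/-!
Rooting every tree of a forest, each vertex has at most one neighbour closer to its root; so on any
vertex set `S` a forest has at most `|S|` edges, and a graph of arboricity at most `α` has total
degree at most `2α |S|` inside `S`. A survivor of a round has more than `3α` active neighbours,
hence at most two thirds of the active vertices survive each round, and after `t` rounds at most
`(2/3)^t n` remain. This is less than one as soon as `t ≥ 2 (log₂ n + 1)`.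
-/

/-- `G` has arboricity at most `k`: its edge set can be partitioned into at most
`k` forests. -/
def SimpleGraph.HasArboricityLE {V : Type*} (G : SimpleGraph V) (k : ℕ) : Prop :=
  ∃ f : Sym2 V → ℕ, (∀ e ∈ G.edgeSet, f e < k) ∧
    ∀ i : ℕ, (SimpleGraph.fromEdgeSet {e | e ∈ G.edgeSet ∧ f e = i}).IsAcyclic

/-- The set of vertices that are still active after `t` rounds of the peeling
process in which every active vertex with at most `3α` active neighbors becomes
inactive. -/
def peel {V : Type*} [Fintype V] [DecidableEq V] (G : SimpleGraph V)
    [DecidableRel G.Adj] (α : ℕ) : ℕ → Finset V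
  | 0 => Finset.univ
  | (i+1) => (peel G α i).filter
      (fun v => 3 * α < ((G.neighborFinset v) ∩ peel G α i).card)

open Finset

namespace SimpleGraph

variable {V : Type*} {H : SimpleGraph V}

/-- Both `x` and `x'` extend a shortest path from `r` to a shortest, hence the unique, path from `r`
to `y`, of which they are the penultimate vertex. -/
lemma IsAcyclic.eq_of_adj_of_dist_lt (hH : H.IsAcyclic) {r x x' y : V} (hr : H.Reachable r y)
    (hx : H.Adj x y) (hx' : H.Adj x' y) (hxy : H.dist r x < H.dist r y)
    (hx'y : H.dist r x' < H.dist r y) : x = x' := by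
  have shortest_concat : ∀ z (hz : H.Adj z y), H.dist r z < H.dist r y →
      ∃ p : H.Walk r z, (p.concat hz).IsPath := by
    intro z hz hzy
    have hrz : H.Reachable r z := hr.trans hz.symm.reachable
    obtain ⟨p, -, hp⟩ := hrz.exists_path_of_dist
    refine ⟨p, (p.concat hz).isPath_of_length_eq_dist ?_⟩
    have := hH.dist_eq_dist_add_one_of_adj_of_reachable r hz hrz
    rw [Walk.length_concat, hp]
    omega
  obtain ⟨p, hp⟩ := shortest_concat x hx hxy
  obtain ⟨p', hp'⟩ := shortest_concat x' hx' hx'y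
  have hpath : p.concat hx = p'.concat hx' :=
    congrArg Subtype.val ((hH.subsingleton_path r y).elim ⟨_, hp⟩ ⟨_, hp'⟩)
  simpa using congrArg Walk.penultimate hpath

/-- Depth below a root chosen in each connected component. -/
lemma IsAcyclic.exists_depth (hH : H.IsAcyclic) : ∃ d : V → ℕ,
    (∀ ⦃x y⦄, H.Adj x y → d x ≠ d y) ∧
    ∀ ⦃x x' y⦄, H.Adj x y → H.Adj x' y → d x < d y → d x' < d y → x = x' := by
  set root : V → V := fun v => (H.connectedComponentMk v).out
  have reachable_root (v : V) : H.Reachable (root v) v :=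
    ConnectedComponent.exact (Quot.out_eq _)
  have root_eq {x y : V} (h : H.Adj x y) : root x = root y :=
    congrArg Quot.out (ConnectedComponent.sound h.reachable)
  refine ⟨fun v => H.dist (root v) v, fun x y h => ?_, fun x x' y hx hx' hxy hx'y => ?_⟩
  · simpa only [root_eq h] using hH.dist_ne_of_adj h (root_eq h ▸ reachable_root x)
  · simp only [root_eq hx, root_eq hx'] at hxy hx'y
    exact hH.eq_of_adj_of_dist_lt (reachable_root y) hx hx' hxy hx'y

variable [DecidableRel H.Adj]

/-- Orient each edge towards its endpoint of smaller depth: every vertex has out-degree at most one,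
and the sum counts each edge once as an out-edge and once as an in-edge. -/
lemma sum_card_adj_le_of_depth (d : V → ℕ) (hd : ∀ ⦃x y⦄, H.Adj x y → d x ≠ d y)
    (hparent : ∀ ⦃x x' y⦄, H.Adj x y → H.Adj x' y → d x < d y → d x' < d y → x = x')
    (S : Finset V) : ∑ v ∈ S, #{w ∈ S | H.Adj v w} ≤ 2 * #S := by
  have down_le_one (v : V) : #{w ∈ S | H.Adj v w ∧ d w < d v} ≤ 1 :=
    card_le_one.mpr fun a ha b hb => by
      simp only [mem_filter] at ha hb
      exact hparent ha.2.1.symm hb.2.1.symm ha.2.2 hb.2.2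
  have split (v : V) : #{w ∈ S | H.Adj v w} =
      #{w ∈ S | H.Adj v w ∧ d w < d v} + #{w ∈ S | H.Adj w v ∧ d v < d w} := by
    classical
    rw [← card_union_of_disjoint (disjoint_filter.mpr fun w _ h h' => by omega)]
    congr 1
    ext w
    simp only [mem_filter, mem_union]
    constructor
    · rintro ⟨hw, h⟩
      rcases Nat.lt_or_gt_of_ne (hd h) with hlt | hlt
      · exact Or.inr ⟨hw, h.symm, hlt⟩
      · exact Or.inl ⟨hw, h, hlt⟩
    · rintro (⟨hw, h, -⟩ | ⟨hw, h, -⟩)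
      exacts [⟨hw, h⟩, ⟨hw, h.symm⟩]
  have down_sum_le : ∑ v ∈ S, #{w ∈ S | H.Adj v w ∧ d w < d v} ≤ #S :=
    (sum_le_sum fun v _ => down_le_one v).trans_eq (card_eq_sum_ones S).symm
  have up_sum_eq : ∑ v ∈ S, #{w ∈ S | H.Adj w v ∧ d v < d w} =
      ∑ v ∈ S, #{w ∈ S | H.Adj v w ∧ d w < d v} :=
    sum_card_bipartiteAbove_eq_sum_card_bipartiteBelow (fun v w => H.Adj w v ∧ d v < d w)
  rw [sum_congr rfl fun v _ => split v, sum_add_distrib, up_sum_eq]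
  omega

lemma IsAcyclic.sum_card_adj_le (hH : H.IsAcyclic) (S : Finset V) :
    ∑ v ∈ S, #{w ∈ S | H.Adj v w} ≤ 2 * #S := by
  obtain ⟨d, hd, hparent⟩ := hH.exists_depth
  exact sum_card_adj_le_of_depth d hd hparent S

lemma HasArboricityLE.sum_card_adj_le {G : SimpleGraph V} [DecidableRel G.Adj] {k : ℕ}
    (hG : G.HasArboricityLE k) (S : Finset V) :
    ∑ v ∈ S, #{w ∈ S | G.Adj v w} ≤ 2 * k * #S := by
  classical
  obtain ⟨f, hf, hforest⟩ := hG
  set F : ℕ → SimpleGraph V := fun i => fromEdgeSet {e | e ∈ G.edgeSet ∧ f e = i}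
  have cover (v : V) :
      {w ∈ S | G.Adj v w} ⊆ (range k).biUnion fun i => {w ∈ S | (F i).Adj v w} := by
    intro w hw
    obtain ⟨hwS, hvw⟩ := mem_filter.mp hw
    exact mem_biUnion.mpr ⟨f s(v, w), mem_range.mpr (hf _ hvw),
      mem_filter.mpr ⟨hwS, (fromEdgeSet_adj _).mpr ⟨⟨hvw, rfl⟩, hvw.ne⟩⟩⟩
  calc ∑ v ∈ S, #{w ∈ S | G.Adj v w}
      ≤ ∑ v ∈ S, ∑ i ∈ range k, #{w ∈ S | (F i).Adj v w} :=
        sum_le_sum fun v _ => (card_le_card (cover v)).trans card_biUnion_le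
    _ = ∑ i ∈ range k, ∑ v ∈ S, #{w ∈ S | (F i).Adj v w} := sum_comm
    _ ≤ ∑ _i ∈ range k, 2 * #S := sum_le_sum fun i _ => (hforest i).sum_card_adj_le S
    _ = 2 * k * #S := by rw [sum_const, card_range, smul_eq_mul]; ring

end SimpleGraph

section Peel

variable {V : Type*} [Fintype V] [DecidableEq V] {G : SimpleGraph V} [DecidableRel G.Adj] {α : ℕ}

lemma peel_succ (t : ℕ) :
    peel G α (t + 1) = {v ∈ peel G α t | 3 * α < #{w ∈ peel G α t | G.Adj v w}} := by
  simp only [peel, SimpleGraph.neighborFinset_eq_filter, filter_inter, univ_inter]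

lemma card_peel_succ_le (hG : G.HasArboricityLE α) (t : ℕ) :
    3 * #(peel G α (t + 1)) ≤ 2 * #(peel G α t) := by
  set S := peel G α t
  have survivors : (3 * α + 1) * #(peel G α (t + 1)) ≤
      ∑ v ∈ peel G α (t + 1), #{w ∈ S | G.Adj v w} := by
    rw [mul_comm, ← smul_eq_mul]
    refine card_nsmul_le_sum _ _ _ fun v hv => ?_
    rw [peel_succ] at hv
    exact (mem_filter.mp hv).2
  have survivors_le_active : ∑ v ∈ peel G α (t + 1), #{w ∈ S | G.Adj v w} ≤
      ∑ v ∈ S, #{w ∈ S | G.Adj v w} :=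
    sum_le_sum_of_subset (peel_succ (G := G) t ▸ filter_subset _ _)
  have active := hG.sum_card_adj_le S
  nlinarith

lemma three_pow_mul_card_peel_le (hG : G.HasArboricityLE α) (t : ℕ) :
    3 ^ t * #(peel G α t) ≤ 2 ^ t * Fintype.card V := by
  induction t with
  | zero => simp [peel]
  | succ t ih =>
    calc 3 ^ (t + 1) * #(peel G α (t + 1)) = 3 ^ t * (3 * #(peel G α (t + 1))) := by ring
      _ ≤ 3 ^ t * (2 * #(peel G α t)) := Nat.mul_le_mul_left _ (card_peel_succ_le hG t)
      _ = 2 * (3 ^ t * #(peel G α t)) := by ring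
      _ ≤ 2 * (2 ^ t * Fintype.card V) := Nat.mul_le_mul_left _ ih
      _ = 2 ^ (t + 1) * Fintype.card V := by ring

lemma peel_eq_empty_of_two_pow_mul_lt (hG : G.HasArboricityLE α) {t : ℕ}
    (ht : 2 ^ t * Fintype.card V < 3 ^ t) : peel G α t = ∅ := by
  have : 3 ^ t * #(peel G α t) < 3 ^ t * 1 := by
    rw [mul_one]
    exact (three_pow_mul_card_peel_le hG t).trans_lt ht
  exact card_eq_zero.mp (Nat.lt_one_iff.mp (Nat.lt_of_mul_lt_mul_left this))

end Peel

lemma two_pow_mul_lt_three_pow {n t : ℕ} (ht : 2 * (Nat.log 2 n + 1) ≤ t) :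
    2 ^ t * n < 3 ^ t := by
  obtain ⟨m, rfl⟩ := Nat.exists_eq_add_of_le ht
  have hn : n < 2 ^ (Nat.log 2 n + 1) := Nat.lt_pow_succ_log_self (by norm_num) n
  generalize Nat.log 2 n + 1 = L at hn
  calc 2 ^ (2 * L + m) * n < 2 ^ (2 * L + m) * 2 ^ L := by gcongr
    _ = (2 ^ 3) ^ L * 2 ^ m := by rw [← pow_mul, ← pow_add, ← pow_add]; ring_nf
    _ ≤ (3 ^ 2) ^ L * 3 ^ m :=
        Nat.mul_le_mul (Nat.pow_le_pow_left (by norm_num) L) (Nat.pow_le_pow_left (by norm_num) m)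
    _ = 3 ^ (2 * L + m) := by rw [← pow_mul, ← pow_add, mul_comm]

/-- If `G` has arboricity at most `α`, the peeling process (deactivating every
vertex with at most `3α` active neighbors) finishes, with all vertices
inactive, within `O(log n)` rounds. -/
theorem peel_empty_of_arboricity :
    ∀ α : ℕ, 1 ≤ α → ∃ C : ℕ, 0 < C ∧
      ∀ (V : Type) [Fintype V] [DecidableEq V] (G : SimpleGraph V)
        [DecidableRel G.Adj],
        G.HasArboricityLE α →
        ∀ t : ℕ, C * (Nat.log 2 (Fintype.card V) + 1) ≤ t → peel G α t = ∅ :=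
  fun _ _ => ⟨2, two_pos, fun _ _ _ _ _ hG _ ht =>
    peel_eq_empty_of_two_pow_mul_lt hG (two_pow_mul_lt_three_pow ht)⟩
end

section
/- Let G be a graph with arboricity at most α on which the peeling process (deactivating vertices with at most 3α active neighbors) is run to completion. Orient each edge {u,v} from the vertex deactivated earlier to the one deactivated later (breaking ties among simultaneously deactivated vertices by orienting from smaller to larger id). Then every vertex has out-degree at most 3α and the orientation is acyclic, yielding a decomposition of the edges of G into at most 3α forests. -/
/-!
Orient every edge towards the endpoint that is larger for the key `v ↦ (d v, v)`, ordered
lexicographically. A vertex deactivated in round `n + 1` was still active in round `n`, and so were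
all its out-neighbours, so it has at most `3α` of them. The orientation is acyclic because it
increases an injective key. Label the edge `u → v` with the number of out-neighbours of `u` whose
key is below that of `v`: the edges with a fixed label give every vertex at most one larger
neighbour, and then the vertex of least key on a cycle would have two larger neighbours on it,
so each label class is a forest.
-/

open Finset Function

namespace SimpleGraph

variable {V β : Type*} [LinearOrder β]

theorem isAcyclic_of_subsingleton_upperNeighbors {H : SimpleGraph V} {f : V → β}
    (hf : Injective f) (h : ∀ u, {v | H.Adj u v ∧ f u < f v}.Subsingleton) : H.IsAcyclic := by
  classical
  intro v c hc
  obtain ⟨u, hu, hmin⟩ := Set.exists_min_image {x | x ∈ c.support} f c.support.finite_toSet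
    ⟨v, c.start_mem_support⟩
  have hc' := hc.rotate hu
  have hnil := hc'.not_nil
  have above : ∀ x, H.Adj u x → x ∈ (c.rotate u hu).support → f u < f x := fun x hx hxc ↦
    (hmin x ((c.mem_support_rotate_iff u hu).1 hxc)).lt_of_ne (hf.ne hx.ne)
  exact hc'.snd_ne_penultimate <| h u
    ⟨Walk.adj_snd hnil, above _ (Walk.adj_snd hnil) (Walk.getVert_mem_support _ _)⟩
    ⟨(Walk.adj_penultimate hnil).symm,
      above _ (Walk.adj_penultimate hnil).symm (Walk.getVert_mem_support _ _)⟩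

variable [Fintype V] (G : SimpleGraph V) [DecidableRel G.Adj] (f : V → β)

def upperNeighborFinset (u : V) : Finset V := {v ∈ G.neighborFinset u | f u < f v}

def upperRank (u v : V) : ℕ := #{w ∈ G.upperNeighborFinset f u | f w < f v}

def edgeRank : Sym2 V → ℕ :=
  Sym2.lift ⟨fun a b ↦
    if f a < f b then G.upperRank f a b else if f b < f a then G.upperRank f b a else 0, by
    intro a b
    rcases lt_trichotomy (f a) (f b) with hab | hab | hab
    · simp [hab, hab.not_gt]
    · simp [hab]
    · simp [hab, hab.not_gt]⟩

variable {G f}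

theorem mem_upperNeighborFinset {u v : V} :
    v ∈ G.upperNeighborFinset f u ↔ G.Adj u v ∧ f u < f v := by
  simp [upperNeighborFinset]

theorem upperRank_lt_card {u v : V} (hv : v ∈ G.upperNeighborFinset f u) :
    G.upperRank f u v < #(G.upperNeighborFinset f u) :=
  card_lt_card (filter_ssubset.2 ⟨v, hv, lt_irrefl _⟩)

theorem upperRank_lt_upperRank {u v w : V} (hv : v ∈ G.upperNeighborFinset f u)
    (hvw : f v < f w) : G.upperRank f u v < G.upperRank f u w := by
  refine card_lt_card ((ssubset_iff_of_subset fun x hx ↦ ?_).2 ⟨v, ?_, ?_⟩)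
  · rw [mem_filter] at hx ⊢
    exact ⟨hx.1, hx.2.trans hvw⟩
  · exact mem_filter.2 ⟨hv, hvw⟩
  · simp

theorem upperRank_injOn (hf : Injective f) (u : V) :
    Set.InjOn (G.upperRank f u) (G.upperNeighborFinset f u) := by
  intro v hv w hw hvw
  rcases lt_trichotomy (f v) (f w) with h | h | h
  · exact absurd hvw (upperRank_lt_upperRank hv h).ne
  · exact hf h
  · exact absurd hvw (upperRank_lt_upperRank hw h).ne'

theorem edgeRank_mk {a b : V} (h : f a < f b) : G.edgeRank f s(a, b) = G.upperRank f a b := by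
  simp [edgeRank, h]

theorem edgeRank_lt {k : ℕ} (hk : ∀ u, #(G.upperNeighborFinset f u) ≤ k) {a b : V}
    (h : f a < f b) (hab : G.Adj a b) : G.edgeRank f s(a, b) < k := by
  rw [edgeRank_mk h]
  exact (upperRank_lt_card (mem_upperNeighborFinset.2 ⟨hab, h⟩)).trans_le (hk a)

theorem hasArboricityLE_of_card_upperNeighborFinset_le (hf : Injective f) {k : ℕ}
    (hk : ∀ u, #(G.upperNeighborFinset f u) ≤ k) : G.HasArboricityLE k := by
  refine ⟨G.edgeRank f, fun e he ↦ ?_, fun i ↦ isAcyclic_of_subsingleton_upperNeighbors hf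
    fun u v ⟨hv_adj, hv⟩ w ⟨hw_adj, hw⟩ ↦ ?_⟩
  · induction e with | h a b =>
    rcases (hf.ne (G.ne_of_adj he)).lt_or_gt with h | h
    · exact edgeRank_lt hk h he
    · rw [Sym2.eq_swap]
      exact edgeRank_lt hk h he.symm
  · obtain ⟨⟨huv, rfl⟩, -⟩ := fromEdgeSet_adj _ |>.1 hv_adj
    obtain ⟨⟨huw, hi⟩, -⟩ := fromEdgeSet_adj _ |>.1 hw_adj
    rw [edgeRank_mk hv, edgeRank_mk hw] at hi
    exact upperRank_injOn hf u (mem_upperNeighborFinset.2 ⟨huw, hw⟩)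
      (mem_upperNeighborFinset.2 ⟨huv, hv⟩) hi |>.symm

end SimpleGraph

section Peel

variable {V : Type*} [Fintype V] [DecidableEq V] {G : SimpleGraph V} [DecidableRel G.Adj] {α : ℕ}

theorem card_neighborFinset_inter_peel_le {u : V} {n : ℕ} (hu : u ∈ peel G α n)
    (hu' : u ∉ peel G α (n + 1)) : #(G.neighborFinset u ∩ peel G α n) ≤ 3 * α := by
  by_contra! hlt
  exact hu' (mem_filter.2 ⟨hu, hlt⟩)

theorem card_neighborFinset_filter_le_le_of_peel {d : V → ℕ}
    (hd : ∀ v, v ∉ peel G α (d v) ∧ ∀ j, j < d v → v ∈ peel G α j) (u : V) :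
    #{v ∈ G.neighborFinset u | d u ≤ d v} ≤ 3 * α := by
  obtain ⟨n, hn⟩ : ∃ n, d u = n + 1 :=
    Nat.exists_eq_succ_of_ne_zero fun h0 ↦ (hd u).1 (by rw [h0]; exact mem_univ u)
  calc #{v ∈ G.neighborFinset u | d u ≤ d v}
      ≤ #(G.neighborFinset u ∩ peel G α n) := card_le_card fun v hv ↦ by
        rw [mem_filter] at hv
        exact mem_inter.2 ⟨hv.1, (hd v).2 n (by omega)⟩
    _ ≤ 3 * α := card_neighborFinset_inter_peel_le ((hd u).2 n (by omega)) (hn ▸ (hd u).1)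

end Peel

theorem peel_orientation_general {V : Type} [Fintype V] [LinearOrder V]
    (G : SimpleGraph V) [DecidableRel G.Adj] (α : ℕ)
    (d : V → ℕ)
    (hd : ∀ v, v ∉ peel G α (d v) ∧ ∀ j, j < d v → v ∈ peel G α j) :
    (∀ u, ((G.neighborFinset u).filter
        (fun v => d u < d v ∨ (d u = d v ∧ u < v))).card ≤ 3 * α) ∧
    (∀ v, ¬ Relation.TransGen
        (fun a b => G.Adj a b ∧ (d a < d b ∨ (d a = d b ∧ a < b))) v v) ∧
    G.HasArboricityLE (3 * α) := by
  let f : V → ℕ ×ₗ V := fun v ↦ toLex (d v, v)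
  have hf : Injective f := fun a b h ↦ congrArg (fun x ↦ (ofLex x).2) h
  have hlt : ∀ u v, (d u < d v ∨ (d u = d v ∧ u < v)) ↔ f u < f v :=
    fun u v ↦ (Prod.Lex.toLex_lt_toLex (x := (d u, u)) (y := (d v, v))).symm
  simp_rw [hlt]
  have hout (u : V) : #(G.upperNeighborFinset f u) ≤ 3 * α := by
    refine (card_le_card fun v hv ↦ ?_).trans (card_neighborFinset_filter_le_le_of_peel hd u)
    rw [SimpleGraph.upperNeighborFinset, mem_filter, ← hlt] at hv
    exact mem_filter.2 ⟨hv.1, hv.2.elim le_of_lt fun h ↦ h.1.le⟩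
  refine ⟨hout, fun v hv ↦ lt_irrefl (f v) ?_,
    G.hasArboricityLE_of_card_upperNeighborFinset_le hf hout⟩
  have hcycle := hv.lift f (p := (· < ·)) fun _ _ h ↦ h.2
  rwa [Relation.transGen_eq_self] at hcycle

/-- Orienting each edge from the endpoint deactivated earlier in the peeling
process to the one deactivated later (ties broken by id) yields an acyclic
orientation with out-degree at most `3α`, and hence a decomposition of the
edges of `G` into at most `3α` forests. Here `d v` is the round in which `v`
becomes inactive. -/
theorem peel_orientation {V : Type} [Fintype V] [LinearOrder V]
    (G : SimpleGraph V) [DecidableRel G.Adj] (α : ℕ) (hα : 1 ≤ α)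
    (h : G.HasArboricityLE α)
    (d : V → ℕ)
    (hd : ∀ v, v ∉ peel G α (d v) ∧ ∀ j, j < d v → v ∈ peel G α j) :
    (∀ u, ((G.neighborFinset u).filter
        (fun v => d u < d v ∨ (d u = d v ∧ u < v))).card ≤ 3 * α) ∧
    (∀ v, ¬ Relation.TransGen
        (fun a b => G.Adj a b ∧ (d a < d b ∨ (d a = d b ∧ a < b))) v v) ∧
    G.HasArboricityLE (3 * α) :=
  peel_orientation_general G α d hd
end

section
/- If a graph G on m edges is ε-far from being planar, and its vertex set is partitioned into parts P¹,...,P^k such that the number of edges between different parts is at most εm/2, then there exists a part P^j such that the induced subgraph G^j = G[P^j] is (ε/2)-far from being planar, i.e., more than (ε/2)·m(G^j) edges must be removed from G^j to make it planar, where m(G^j) is the number of edges of G^j. -/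
/-- `H` is a minor of `G`: there is a family of nonempty, pairwise disjoint,
connected branch sets in `G`, one for each vertex of `H`, such that adjacent
vertices of `H` have an edge of `G` between their branch sets. -/
def SimpleGraph.IsMinorOf {W V : Type*} (H : SimpleGraph W) (G : SimpleGraph V) : Prop :=
  ∃ f : W → Set V,
    (∀ w, (f w).Nonempty) ∧
    (∀ w, (G.induce (f w)).Connected) ∧
    (Pairwise fun w w' => Disjoint (f w) (f w')) ∧
    (∀ ⦃w w'⦄, H.Adj w w' → ∃ u ∈ f w, ∃ v ∈ f w', G.Adj u v)

/-- A graph is planar iff it has neither a `K₅` nor a `K₃,₃` minor (Wagner). -/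
def SimpleGraph.IsPlanar {V : Type*} (G : SimpleGraph V) : Prop :=
  ¬ (completeGraph (Fin 5)).IsMinorOf G ∧
  ¬ (completeBipartiteGraph (Fin 3) (Fin 3)).IsMinorOf G

/-- `G` is `ε`-far from being planar: more than `ε·m` edges must be removed to
obtain a planar graph, where `m` is the number of edges of `G`. -/
def SimpleGraph.FarFromPlanar {V : Type*} (G : SimpleGraph V) (ε : ℝ) : Prop :=
  ∀ H : SimpleGraph V, H ≤ G → H.IsPlanar →
    ε * G.edgeSet.ncard < (G.edgeSet.ncard : ℝ) - H.edgeSet.ncard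
/-!
Suppose no part is `(ε/2)`-far from planar, and pick in each part `P^j` a planar subgraph `H^j`
of `G^j` missing at most `(ε/2)·m(G^j)` of its edges. The union `H` of the `H^j` is a planar
subgraph of `G`: `K₅` and `K₃,₃` are connected, and a connected minor of a graph without edges
between parts already is a minor of one of its parts. Since
`m(G) = #(edges between parts) + Σ_j m(G^j)`, `H` misses at most
`εm/2 + (ε/2)·Σ_j m(G^j) ≤ εm` edges of `G`, contradicting that `G` is `ε`-far from planar.
-/

namespace SimpleGraph

variable {V W ι : Type*}

lemma Reachable.apply_eq_of_forall_adj {G : SimpleGraph V} (P : V → ι)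
    (hP : ∀ u v, G.Adj u v → P u = P v) {u v : V} (h : G.Reachable u v) : P u = P v := by
  obtain ⟨p⟩ := h
  induction p with
  | nil => rfl
  | cons hadj _ ih => exact (hP _ _ hadj).trans ih

theorem completeBipartiteGraph_connected [Nonempty V] [Nonempty W] :
    (completeBipartiteGraph V W).Connected := by
  obtain ⟨a⟩ := ‹Nonempty V›
  obtain ⟨b⟩ := ‹Nonempty W›
  have hreach : ∀ x, (completeBipartiteGraph V W).Reachable x (.inr b) := by
    rintro (a' | b')
    · exact Adj.reachable (by simp)
    · exact (Adj.reachable (by simp) : (completeBipartiteGraph V W).Reachable _ (.inl a)).trans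
        (Adj.reachable (by simp))
  exact (connected_iff _).mpr ⟨fun x y => (hreach x).trans (hreach y).symm, ⟨.inl a⟩⟩

def induceInduceIso (G : SimpleGraph V) {s t : Set V} (hts : t ⊆ s) :
    (G.induce s).induce {x : s | ↑x ∈ t} ≃g G.induce t where
  toFun x := ⟨x.1.1, x.2⟩
  invFun y := ⟨⟨y.1, hts y.2⟩, y.2⟩
  left_inv _ := rfl
  right_inv _ := rfl
  map_rel_iff' := Iff.rfl

section Minor

def IsMinorModel (K : SimpleGraph W) (G : SimpleGraph V) (f : W → Set V) : Prop :=
  (∀ w, (f w).Nonempty) ∧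
    (∀ w, (G.induce (f w)).Connected) ∧
    (Pairwise fun w w' => Disjoint (f w) (f w')) ∧
    (∀ ⦃w w'⦄, K.Adj w w' → ∃ u ∈ f w, ∃ v ∈ f w', G.Adj u v)

variable {K : SimpleGraph W} {G : SimpleGraph V} {f : W → Set V}

lemma isMinorOf_iff_exists_isMinorModel : K.IsMinorOf G ↔ ∃ f, K.IsMinorModel G f := Iff.rfl

lemma IsMinorModel.isMinorOf_induce {s : Set V} (hf : K.IsMinorModel G f)
    (hs : ∀ w, f w ⊆ s) : K.IsMinorOf (G.induce s) := by
  obtain ⟨hne, hconn, hdisj, hadj⟩ := hf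
  refine ⟨fun w => {x | ↑x ∈ f w}, fun w => ?_, fun w => ?_, fun w w' hww' => ?_,
    fun w w' hww' => ?_⟩
  · obtain ⟨x, hx⟩ := hne w
    exact ⟨⟨x, hs w hx⟩, hx⟩
  · exact (G.induceInduceIso (hs w)).connected_iff.mpr (hconn w)
  · exact Set.disjoint_left.mpr fun x hx hx' => Set.disjoint_left.mp (hdisj hww') hx hx'
  · obtain ⟨u, hu, v, hv, huv⟩ := hadj hww'
    exact ⟨⟨u, hs w hu⟩, hu, ⟨v, hs w' hv⟩, hv, huv⟩

lemma IsMinorModel.exists_subset_fiber (P : V → ι) (hP : ∀ u v, G.Adj u v → P u = P v)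
    (hK : K.Connected) (hf : K.IsMinorModel G f) : ∃ j, ∀ w, f w ⊆ {v | P v = j} := by
  obtain ⟨hne, hconn, -, hadj⟩ := hf
  have hconst : ∀ w, ∀ x ∈ f w, ∀ y ∈ f w, P x = P y := fun w x hx y hy =>
    (((hconn w).preconnected ⟨x, hx⟩ ⟨y, hy⟩).map (Embedding.induce (f w)).toHom)
      |>.apply_eq_of_forall_adj P hP
  choose g hg using hne
  have hgK : ∀ w w', K.Adj w w' → P (g w) = P (g w') := by
    intro w w' hww'
    obtain ⟨u, hu, v, hv, huv⟩ := hadj hww'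
    rw [hconst w _ (hg w) u hu, hP u v huv, hconst w' v hv _ (hg w')]
  obtain ⟨w₀⟩ := hK.nonempty
  exact ⟨P (g w₀), fun w x hx => (hconst w x hx _ (hg w)).trans
    ((hK.preconnected w w₀).apply_eq_of_forall_adj (P ∘ g) hgK)⟩

lemma IsMinorOf.exists_induce_fiber (P : V → ι) (hP : ∀ u v, G.Adj u v → P u = P v)
    (hK : K.Connected) (h : K.IsMinorOf G) : ∃ j, K.IsMinorOf (G.induce {v | P v = j}) := by
  obtain ⟨f, hf⟩ := isMinorOf_iff_exists_isMinorModel.mp h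
  obtain ⟨j, hj⟩ := hf.exists_subset_fiber P hP hK
  exact ⟨j, hf.isMinorOf_induce hj⟩

theorem isPlanar_of_forall_induce_fiber (P : V → ι) (hP : ∀ u v, G.Adj u v → P u = P v)
    (h : ∀ j, (G.induce {v | P v = j}).IsPlanar) : G.IsPlanar := by
  constructor
  · intro hK
    obtain ⟨j, hj⟩ := hK.exists_induce_fiber P hP connected_top
    exact (h j).1 hj
  · intro hK
    obtain ⟨j, hj⟩ := hK.exists_induce_fiber P hP completeBipartiteGraph_connected
    exact (h j).2 hj

end Minor

section Glue

def glueParts (P : V → ι) (H : ∀ j, SimpleGraph {v | P v = j}) : SimpleGraph V :=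
  ⨆ j, (H j).map (Function.Embedding.subtype _)

variable (P : V → ι) (H : ∀ j, SimpleGraph {v | P v = j})

lemma glueParts_adj {u v : V} :
    (glueParts P H).Adj u v ↔
      ∃ j, ∃ (hu : P u = j) (hv : P v = j), (H j).Adj ⟨u, hu⟩ ⟨v, hv⟩ := by
  simp only [glueParts, iSup_adj, map_adj, Function.Embedding.subtype_apply]
  constructor
  · rintro ⟨j, u', v', h, rfl, rfl⟩
    exact ⟨j, u'.2, v'.2, h⟩
  · rintro ⟨j, hu, hv, h⟩
    exact ⟨j, _, _, h, rfl, rfl⟩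

lemma apply_eq_of_adj_glueParts {u v : V} (h : (glueParts P H).Adj u v) : P u = P v := by
  obtain ⟨j, hu, hv, -⟩ := (glueParts_adj P H).mp h
  exact hu.trans hv.symm

lemma induce_glueParts (j : ι) : (glueParts P H).induce {v | P v = j} = H j := by
  ext ⟨u, hu⟩ ⟨v, hv⟩
  simp only [comap_adj, Function.Embedding.subtype_apply, glueParts_adj]
  constructor
  · rintro ⟨j', hu', _, h⟩
    obtain rfl : j' = j := hu'.symm.trans hu
    exact h
  · exact fun h => ⟨j, hu, hv, h⟩

theorem isPlanar_glueParts (h : ∀ j, (H j).IsPlanar) : (glueParts P H).IsPlanar :=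
  isPlanar_of_forall_induce_fiber P (fun _ _ => apply_eq_of_adj_glueParts P H)
    fun j => induce_glueParts P H j ▸ h j

lemma glueParts_mono {H' : ∀ j, SimpleGraph {v | P v = j}} (h : ∀ j, H j ≤ H' j) :
    glueParts P H ≤ glueParts P H' :=
  iSup_mono fun j => map_monotone _ (h j)

lemma glueParts_induce_eq_deleteEdges (G : SimpleGraph V) :
    glueParts P (fun j => G.induce {v | P v = j}) =
      G.deleteEdges {e | ∃ u v, e = s(u, v) ∧ P u ≠ P v} := by
  ext u v
  simp only [glueParts_adj, comap_adj, Function.Embedding.subtype_apply, deleteEdges_adj,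
    Set.mem_ofPred_eq, Sym2.eq_iff, not_exists, not_and, not_not]
  constructor
  · rintro ⟨j, hu, hv, h⟩
    refine ⟨h, fun a b hab => ?_⟩
    rcases hab with ⟨rfl, rfl⟩ | ⟨rfl, rfl⟩
    exacts [hu.trans hv.symm, hv.trans hu.symm]
  · rintro ⟨h, hP⟩
    exact ⟨P v, hP u v (.inl ⟨rfl, rfl⟩), rfl, h⟩

lemma apply_eq_of_mem_edgeSet_map_subtype {j : ι} {e : Sym2 V}
    (he : e ∈ ((H j).map (Function.Embedding.subtype _)).edgeSet) {x : V} (hx : x ∈ e) :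
    P x = j := by
  rw [edgeSet_map] at he
  obtain ⟨e', -, rfl⟩ := he
  obtain ⟨a, -, rfl⟩ := Sym2.mem_map.mp hx
  exact a.2

lemma ncard_edgeSet_glueParts [Finite V] [Fintype ι] :
    (glueParts P H).edgeSet.ncard = ∑ j, (H j).edgeSet.ncard := by
  have hdisj : Pairwise fun i j => Disjoint ((H i).map (Function.Embedding.subtype _)).edgeSet
      ((H j).map (Function.Embedding.subtype _)).edgeSet := fun i j hij =>
    Set.disjoint_left.mpr fun e hi hj =>
      hij <| (apply_eq_of_mem_edgeSet_map_subtype P H hi e.out_fst_mem).symm.trans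
        (apply_eq_of_mem_edgeSet_map_subtype P H hj e.out_fst_mem)
  rw [glueParts, edgeSet_iSup, Set.ncard_iUnion_of_finite (fun _ => Set.toFinite _) hdisj,
    finsum_eq_sum_of_fintype]
  refine Finset.sum_congr rfl fun j _ => ?_
  rw [edgeSet_map]
  exact Set.ncard_image_of_injective _ (Function.Embedding.subtype _).sym2Map.injective

theorem ncard_edgeSet_eq_cut_add_sum [Finite V] [Fintype ι] (G : SimpleGraph V) :
    G.edgeSet.ncard = {e ∈ G.edgeSet | ∃ u v, e = s(u, v) ∧ P u ≠ P v}.ncard +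
      ∑ j, (G.induce {v | P v = j}).edgeSet.ncard := by
  rw [← ncard_edgeSet_glueParts, glueParts_induce_eq_deleteEdges, edgeSet_deleteEdges]
  exact (Set.ncard_inter_add_ncard_sdiff_eq_ncard _ _).symm

end Glue

end SimpleGraph

open SimpleGraph

theorem exists_far_part_general {V : Type} [Fintype V] (G : SimpleGraph V)
    (ε : ℝ) (hε : 0 < ε)
    (k : ℕ) (P : V → Fin k)
    (hcut : ({e ∈ G.edgeSet | ∃ u v, e = s(u, v) ∧ P u ≠ P v}.ncard : ℝ) ≤
      ε * G.edgeSet.ncard / 2)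
    (hfar : G.FarFromPlanar ε) :
    ∃ j : Fin k, (G.induce {v | P v = j}).FarFromPlanar (ε / 2) := by
  by_contra! hnear
  simp only [FarFromPlanar, not_forall, not_lt, exists_prop] at hnear
  choose H hHG hH hmiss using hnear
  have hglueG : glueParts P H ≤ G := (glueParts_mono P H hHG).trans
    (glueParts_induce_eq_deleteEdges P G ▸ deleteEdges_le _)
  have hsplit : (G.edgeSet.ncard : ℝ) =
      {e ∈ G.edgeSet | ∃ u v, e = s(u, v) ∧ P u ≠ P v}.ncard +
        ∑ j, ((G.induce {v | P v = j}).edgeSet.ncard : ℝ) := by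
    exact_mod_cast ncard_edgeSet_eq_cut_add_sum P G
  have hmissing : ∑ j, ((G.induce {v | P v = j}).edgeSet.ncard - (H j).edgeSet.ncard : ℝ) ≤
      ε / 2 * G.edgeSet.ncard := calc
    _ ≤ ∑ j, ε / 2 * ((G.induce {v | P v = j}).edgeSet.ncard : ℝ) :=
      Finset.sum_le_sum fun j _ => hmiss j
    _ ≤ ε / 2 * G.edgeSet.ncard := by
      rw [← Finset.mul_sum]
      gcongr
      exact (le_add_of_nonneg_left (Nat.cast_nonneg _)).trans_eq hsplit.symm
  have hfar' := hfar _ hglueG (isPlanar_glueParts P H hH)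
  rw [ncard_edgeSet_glueParts, Nat.cast_sum] at hfar'
  rw [Finset.sum_sub_distrib] at hmissing
  linarith

/-- If `G` is `ε`-far from planar and its vertex set is partitioned into parts
with at most `εm/2` edges between different parts, then the subgraph induced by
some part is `(ε/2)`-far from planar. -/
theorem exists_far_part {V : Type} [Fintype V] (G : SimpleGraph V)
    (ε : ℝ) (hε : 0 < ε) (hε1 : ε < 1)
    (k : ℕ) (P : V → Fin k)
    (hcut : ({e ∈ G.edgeSet | ∃ u v, e = s(u, v) ∧ P u ≠ P v}.ncard : ℝ) ≤
      ε * G.edgeSet.ncard / 2)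
    (hfar : G.FarFromPlanar ε) :
    ∃ j : Fin k, (G.induce {v | P v = j}).FarFromPlanar (ε / 2) :=
  exists_far_part_general G ε hε k P hcut hfar
end

section
/- Let G be a weighted graph of arboricity at most α, and suppose each vertex v independently draws one incident edge (u,v) with probability w(u,v)/w(v), where w(v) is the total weight of edges incident to v, repeats this s = Θ(log(1/δ)) times, and keeps the maximum-weight drawn edge. Then with probability at least 1 - δ, the total weight of the edges kept (over all vertices) is at least w(G)/(16α). -/
open MeasureTheory

/-- The distribution of a single weighted draw at vertex `v`: an incident edge
`(v,u)` is drawn with probability proportional to its weight. -/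
noncomputable def drawM {V : Type} [Fintype V] [DecidableEq V] [MeasurableSpace V]
    (G : SimpleGraph V) [DecidableRel G.Adj] (w : Sym2 V → ℝ) (v : V) :
    Measure V :=
  ∑ u ∈ G.neighborFinset v,
    (ENNReal.ofReal (w s(v, u) / ∑ x ∈ G.neighborFinset v, w s(v, x))) •
      Measure.dirac u

instance drawM_finite {V : Type} [Fintype V] [DecidableEq V] [MeasurableSpace V]
    (G : SimpleGraph V) [DecidableRel G.Adj] (w : Sym2 V → ℝ) (v : V) :
    IsFiniteMeasure (drawM G w v) := by
  constructor
  simp only [drawM, Measure.finset_sum_apply, Measure.smul_apply, smul_eq_mul,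
    measure_univ, mul_one]
  exact ENNReal.sum_lt_top.mpr fun _ _ => ENNReal.ofReal_lt_top

/-- The product measure of `s` independent weighted draws at every vertex. -/
noncomputable def drawSpace {V : Type} [Fintype V] [DecidableEq V]
    [MeasurableSpace V] (G : SimpleGraph V) [DecidableRel G.Adj]
    (w : Sym2 V → ℝ) (s : ℕ) : Measure (Fin s × V → V) :=
  Measure.pi fun i => drawM G w i.2

open Finset
open scoped ENNReal

theorem Finset.exists_le_sum_filter_le_and_sum_filter_lt_le {ι : Type*} {t : Finset ι}
    (f : ι → ℝ) {c : ℝ} (hc : 0 < c) (hct : c ≤ ∑ i ∈ t, f i) :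
    ∃ i ∈ t, c ≤ ∑ j ∈ t with f i ≤ f j, f j ∧ ∑ j ∈ t with f i < f j, f j ≤ c := by
  have ht : t.Nonempty := nonempty_of_sum_ne_zero (f := f) (by linarith)
  obtain ⟨i₀, hi₀, hi₀_min⟩ := t.exists_min_image f ht
  set cand := {i ∈ t | c ≤ ∑ j ∈ t with f i ≤ f j, f j}
  have hi₀_cand : i₀ ∈ cand := by
    rwa [mem_filter, filter_true_of_mem hi₀_min, and_iff_right hi₀]
  obtain ⟨i, hi, hi_max⟩ := cand.exists_max_image f ⟨i₀, hi₀_cand⟩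
  rw [mem_filter] at hi
  refine ⟨i, hi.1, hi.2, ?_⟩
  by_contra! hlt
  obtain ⟨j, hj, hj_min⟩ :=
    exists_min_image _ f (nonempty_of_sum_ne_zero (s := {j ∈ t | f i < f j}) (f := f) (by linarith))
  rw [mem_filter] at hj
  have h_above : {k ∈ t | f j ≤ f k} = {k ∈ t | f i < f k} := by
    ext k
    simp only [mem_filter]
    exact ⟨fun ⟨hk, hjk⟩ => ⟨hk, hj.2.trans_le hjk⟩, fun hk => ⟨hk.1, hj_min k (mem_filter.2 hk)⟩⟩
  have hj_cand : j ∈ cand := mem_filter.2 ⟨hj.1, by rw [h_above]; exact hlt.le⟩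
  exact (hi_max j hj_cand).not_gt hj.2

theorem Finset.mul_sum_filter_lt_le_sum_mul_sum_filter {ι κ : Type*} (S : Finset ι) (T : Finset κ)
    (B : κ → ι → Prop) [∀ v ω, Decidable (B v ω)] {q : ι → ℝ} {τ : κ → ℝ}
    (hq : ∀ ω ∈ S, 0 ≤ q ω) (hτ : ∀ v ∈ T, 0 ≤ τ v) (c : ℝ) :
    c * ∑ ω ∈ S with c < ∑ v ∈ T with B v ω, τ v, q ω ≤
      ∑ v ∈ T, τ v * ∑ ω ∈ S with B v ω, q ω := by
  have hY (ω) : 0 ≤ ∑ v ∈ T with B v ω, τ v := sum_nonneg fun v hv => hτ v (mem_filter.1 hv).1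
  calc c * ∑ ω ∈ S with c < ∑ v ∈ T with B v ω, τ v, q ω
      ≤ ∑ ω ∈ S with c < ∑ v ∈ T with B v ω, τ v, (∑ v ∈ T with B v ω, τ v) * q ω := by
        rw [mul_sum]
        refine sum_le_sum fun ω hω => ?_
        rw [mem_filter] at hω
        exact mul_le_mul_of_nonneg_right hω.2.le (hq ω hω.1)
    _ ≤ ∑ ω ∈ S, (∑ v ∈ T with B v ω, τ v) * q ω :=
        sum_le_sum_of_subset_of_nonneg (filter_subset _ _) fun ω hω _ =>
          mul_nonneg (hY ω) (hq ω hω)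
    _ = ∑ v ∈ T, τ v * ∑ ω ∈ S with B v ω, q ω := by
        simp only [sum_filter, sum_mul, mul_sum, ite_mul, zero_mul, mul_ite, mul_zero]
        exact sum_comm

theorem Finset.sum_le_two_mul_sum_image {α : Type*} [Fintype α] [DecidableEq α]
    (sel : α → Sym2 α) (hsel : ∀ a, a ∈ sel a) {g : Sym2 α → ℝ} (hg : ∀ e, 0 ≤ g e) :
    ∑ a, g (sel a) ≤ 2 * ∑ e ∈ univ.image sel, g e := by
  rw [sum_comp, mul_sum]
  refine sum_le_sum fun e _ => ?_
  rw [nsmul_eq_mul]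
  gcongr
  · exact hg e
  · have h_fiber : ({a | sel a = e} : Finset α) ⊆ e.toFinset := fun a ha =>
      Sym2.mem_toFinset.2 ((mem_filter.1 ha).2 ▸ hsel a)
    calc (#({a | sel a = e} : Finset α) : ℝ) ≤ #e.toFinset := by exact_mod_cast card_le_card h_fiber
      _ ≤ 2 := by rw [Sym2.card_toFinset]; split_ifs <;> norm_num

section ProductOfFiniteSums

variable {ι : Type*} [Fintype ι] [DecidableEq ι] {α : ι → Type*}

theorem Finset.sum_filter_piFinset_forall_prod {R : Type*} [CommSemiring R]
    (t : ∀ i, Finset (α i)) (P : ∀ i, α i → Prop) [∀ i, DecidablePred (P i)]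
    (f : ∀ i, α i → R) :
    ∑ ω ∈ Fintype.piFinset t with ∀ i, P i (ω i), ∏ i, f i (ω i) =
      ∏ i, ∑ u ∈ t i with P i u, f i u := by
  rw [Finset.prod_univ_sum]
  congr 1
  ext ω
  simp [Fintype.mem_piFinset, forall_and]

variable [∀ i, MeasurableSpace (α i)] {μ : ∀ i, Measure (α i)} [∀ i, SigmaFinite (μ i)]

theorem MeasureTheory.Measure.pi_eq_sum_smul_dirac (t : ∀ i, Finset (α i))
    (a : ∀ i, α i → ℝ≥0∞) (hμ : ∀ i, μ i = ∑ u ∈ t i, a i u • Measure.dirac u) :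
    Measure.pi μ = ∑ ω ∈ Fintype.piFinset t, (∏ i, a i (ω i)) • Measure.dirac ω := by
  refine Measure.pi_eq fun B hB => ?_
  simp only [hμ, Measure.finsetSum_apply, Measure.smul_apply, smul_eq_mul,
    Measure.dirac_apply' _ (MeasurableSet.univ_pi hB), Measure.dirac_apply' _ (hB _)]
  rw [Finset.prod_univ_sum]
  refine Finset.sum_congr rfl fun ω _ => ?_
  rw [← Finset.coe_univ, Set.indicator_pi_one_apply, ← Finset.prod_mul_distrib]

theorem MeasureTheory.Measure.sum_filter_prod_le_pi_apply (t : ∀ i, Finset (α i))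
    (a : ∀ i, α i → ℝ≥0∞) (hμ : ∀ i, μ i = ∑ u ∈ t i, a i u • Measure.dirac u)
    (A : Set (∀ i, α i)) [DecidablePred (· ∈ A)] :
    ∑ ω ∈ Fintype.piFinset t with ω ∈ A, ∏ i, a i (ω i) ≤ Measure.pi μ A := by
  rw [Measure.pi_eq_sum_smul_dirac t a hμ, Measure.finsetSum_apply, Finset.sum_filter]
  refine Finset.sum_le_sum fun ω _ => ?_
  split_ifs with hω
  · calc ∏ i, a i (ω i) = (∏ i, a i (ω i)) * A.indicator 1 ω := by simp [hω]
      _ ≤ _ := by simp only [Measure.smul_apply, smul_eq_mul]; gcongr; exact Measure.le_dirac_apply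
  · exact zero_le

end ProductOfFiniteSums

theorem two_mul_three_quarters_pow_le {δ : ℝ} (hδ : 0 < δ) {s : ℕ}
    (hs : 4 * (Real.log (1 / δ) + 1) ≤ s) : 2 * (3 / 4 : ℝ) ^ s ≤ δ := by
  have h_base : (3 / 4 : ℝ) ≤ Real.exp (-(1 / 4)) := by linarith [Real.add_one_le_exp (-(1 / 4))]
  have h_e : (2 : ℝ) ≤ Real.exp 1 := by linarith [Real.add_one_le_exp 1]
  calc 2 * (3 / 4 : ℝ) ^ s ≤ 2 * Real.exp (-(1 / 4)) ^ s := by gcongr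
    _ = 2 * Real.exp (-(s / 4)) := by rw [← Real.exp_nat_mul]; ring_nf
    _ ≤ 2 * Real.exp (-(Real.log (1 / δ) + 1)) := by gcongr; linarith
    _ = 2 / Real.exp 1 * δ := by
        rw [neg_add, Real.exp_add, Real.exp_neg, Real.exp_log (by positivity), Real.exp_neg]
        field_simp
    _ ≤ δ := by
        have : 2 / Real.exp 1 ≤ 1 := by rw [div_le_one (by positivity)]; exact h_e
        nlinarith

namespace SimpleGraph

variable {V : Type*} {G : SimpleGraph V}

theorem IsAcyclic.eq_penultimate_of_adj_of_dist_le {H : SimpleGraph V} (hH : H.IsAcyclic)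
    {r z u : V} {p : H.Walk r z} (hp : p.IsPath) (hzu : H.Adj z u) (hru : H.Reachable r u)
    (hd : H.dist r u ≤ H.dist r z) : u = p.penultimate := by
  classical
  obtain ⟨q, hq, hq_len⟩ := hru.exists_path_of_dist
  have hz : z ∉ q.support := by
    intro hz
    have h_take : H.dist r z ≤ (q.takeUntil z hz).length := dist_le _
    have h_split := congrArg Walk.length (q.take_spec hz)
    have h_drop : (q.dropUntil z hz).length ≠ 0 := fun h => hzu.ne (Walk.eq_of_length_eq_zero h)
    rw [Walk.length_append] at h_split
    omega
  exact hH.eq_penultimate_of_adj_end hp hzu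
    (hH.mem_support_of_ne_mem_support_of_adj_of_isPath hp hq hzu hz)

/-- Root every component; the edge from a vertex towards its root is the only one on which that
vertex is the endpoint farther from the root. -/
theorem IsAcyclic.exists_injOn_mem {H : SimpleGraph V} (hH : H.IsAcyclic) :
    ∃ t : Sym2 V → V, (∀ e ∈ H.edgeSet, t e ∈ e) ∧ Set.InjOn t H.edgeSet := by
  let root v := (H.connectedComponentMk v).out
  have reachable_root v : H.Reachable (root v) v :=
    ConnectedComponent.exact (Quot.out_eq (H.connectedComponentMk v))
  have root_eq {a b} (hab : H.Adj a b) : root a = root b := by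
    simp only [root, ConnectedComponent.connectedComponentMk_eq_of_adj hab]
  have farther (e : Sym2 V) : ∃ z ∈ e, ∀ y ∈ e, H.dist (root y) y ≤ H.dist (root z) z := by
    induction e using Sym2.ind with
    | h a b =>
      rcases le_total (H.dist (root a) a) (H.dist (root b) b) with hab | hab
      · exact ⟨b, Sym2.mem_mk_right a b, by simp [hab]⟩
      · exact ⟨a, Sym2.mem_mk_left a b, by simp [hab]⟩
  choose t ht_mem ht_far using farther
  have eq_penultimate {e z} (he : e ∈ H.edgeSet) (hz : t e = z) (p : H.Walk (root z) z)
      (hp : p.IsPath) : e = s(z, p.penultimate) := by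
    obtain ⟨u, rfl⟩ := Sym2.mem_iff_exists.mp (hz ▸ ht_mem e)
    have hadj : H.Adj z u := he
    have hd := hz ▸ ht_far _ u (Sym2.mem_mk_right _ _)
    rw [← root_eq hadj] at hd
    rw [← hH.eq_penultimate_of_adj_of_dist_le hp hadj (root_eq hadj ▸ reachable_root u) hd]
  refine ⟨t, fun e _ => ht_mem e, fun e he e' he' hee' => ?_⟩
  obtain ⟨p, hp, -⟩ := (reachable_root (t e)).exists_path_of_dist
  rw [eq_penultimate he rfl p hp, eq_penultimate he' hee'.symm p hp]

theorem HasArboricityLE.exists_orientation [Fintype V] [DecidableEq V] [DecidableRel G.Adj]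
    {k : ℕ} (h : G.HasArboricityLE k) :
    ∃ T : Sym2 V → V, (∀ e ∈ G.edgeSet, T e ∈ e) ∧ ∀ v, #{e ∈ G.edgeFinset | T e = v} ≤ k := by
  obtain ⟨f, hf_lt, hf_forest⟩ := h
  choose t ht_mem ht_inj using fun i => (hf_forest i).exists_injOn_mem
  have mem_forest {e} (he : e ∈ G.edgeSet) {i} (hi : f e = i) :
      e ∈ (fromEdgeSet {e | e ∈ G.edgeSet ∧ f e = i}).edgeSet := by
    rw [edgeSet_fromEdgeSet]
    exact ⟨⟨he, hi⟩, G.not_isDiag_of_mem_edgeSet he⟩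
  refine ⟨fun e => t (f e) e, fun e he => ht_mem _ _ (mem_forest he rfl), fun v => ?_⟩
  calc #{e ∈ G.edgeFinset | t (f e) e = v} ≤ #(range k) := by
        refine Finset.card_le_card_of_injOn f (fun e he => ?_) fun e he e' he' hfe => ?_
        · simp only [coe_filter, mem_edgeFinset, Set.mem_ofPred_eq] at he
          simpa using hf_lt e he.1
        · simp only [coe_filter, mem_edgeFinset, Set.mem_ofPred_eq] at he he'
          refine ht_inj (f e) (mem_forest he.1 rfl) (mem_forest he'.1 hfe.symm) ?_
          rw [he.2, ← he'.2, hfe]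
    _ = k := card_range k

section IncidenceSums

variable [Fintype V] [DecidableEq V] [DecidableRel G.Adj] {M : Type*} [AddCommMonoid M]

theorem sum_incidenceFinset_eq_sum_neighborFinset (f : Sym2 V → M) (v : V) :
    ∑ e ∈ G.incidenceFinset v, f e = ∑ u ∈ G.neighborFinset v, f s(v, u) := by
  rw [← Finset.sum_image fun _ _ _ _ h => Sym2.congr_right.mp h]
  congr 1
  ext e
  induction e using Sym2.ind with
  | h a b =>
    simp only [mem_incidenceFinset, mk'_mem_incidenceSet_iff, mem_image, mem_neighborFinset,
      Sym2.eq_iff]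
    grind [G.adj_symm]

theorem sum_sum_incidenceFinset_eq_two_nsmul (f : Sym2 V → M) :
    ∑ v, ∑ e ∈ G.incidenceFinset v, f e = 2 • ∑ e ∈ G.edgeFinset, f e := by
  rw [Finset.sum_comm' (t' := G.edgeFinset) (s' := fun e => e.toFinset) (by
    intro v e
    simp [incidenceFinset_eq_filter, and_comm])]
  rw [Finset.smul_sum]
  refine Finset.sum_congr rfl fun e he => ?_
  rw [Finset.sum_const, Sym2.card_toFinset_of_not_isDiag _
    (G.not_isDiag_of_mem_edgeSet (mem_edgeFinset.mp he))]

end IncidenceSums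

def weightedDegree (G : SimpleGraph V) (w : Sym2 V → ℝ) (v : V)
    [Fintype (G.neighborSet v)] : ℝ :=
  ∑ u ∈ G.neighborFinset v, w s(v, u)

theorem sum_div_weightedDegree_eq_one {w : Sym2 V → ℝ} {v : V} [Fintype (G.neighborSet v)]
    (hv : 0 < G.weightedDegree w v) :
    ∑ u ∈ G.neighborFinset v, w s(v, u) / G.weightedDegree w v = 1 := by
  rw [← sum_div]
  exact div_self hv.ne'

def IsQuarterThreshold (G : SimpleGraph V) (w : Sym2 V → ℝ) (v : V) [Fintype (G.neighborSet v)]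
    (τ : ℝ) : Prop :=
  G.weightedDegree w v / 4 ≤ ∑ u ∈ G.neighborFinset v with τ ≤ w s(v, u), w s(v, u) ∧
    ∑ u ∈ G.neighborFinset v with τ < w s(v, u), w s(v, u) ≤ G.weightedDegree w v / 4

theorem exists_isQuarterThreshold {w : Sym2 V → ℝ} (hw : ∀ e, 0 ≤ w e) {v : V}
    [Fintype (G.neighborSet v)] (hv : 0 < G.weightedDegree w v) :
    ∃ τ, 0 ≤ τ ∧ G.IsQuarterThreshold w v τ := by
  obtain ⟨u, -, hu⟩ := Finset.exists_le_sum_filter_le_and_sum_filter_lt_le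
    (t := G.neighborFinset v) (fun u => w s(v, u)) (by positivity : 0 < G.weightedDegree w v / 4)
    (by unfold weightedDegree at hv ⊢; linarith)
  exact ⟨w s(v, u), hw _, hu⟩

variable [Fintype V] [DecidableEq V] [DecidableRel G.Adj]

theorem HasArboricityLE.sum_edgeFinset_le_two_mul_mul_sum {k : ℕ} (hG : G.HasArboricityLE k)
    {w : Sym2 V → ℝ} (hw : ∀ e, 0 ≤ w e) {τ : V → ℝ} (hτ_nonneg : ∀ v, 0 ≤ τ v)
    (hτ : ∀ v, G.IsQuarterThreshold w v (τ v)) :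
    ∑ e ∈ G.edgeFinset, w e ≤ 2 * k * ∑ v, τ v := by
  obtain ⟨T, hT_mem, hT_card⟩ := hG.exists_orientation
  have tail_le v : ∑ e ∈ G.edgeFinset with T e = v, w e ≤
      k * τ v + ∑ e ∈ G.incidenceFinset v with τ v < w e, w e := by
    rw [← sum_filter_add_sum_filter_not _ (fun e => w e ≤ τ v)]
    gcongr ?_ + ?_
    · calc _ ≤ #{e ∈ {e ∈ G.edgeFinset | T e = v} | w e ≤ τ v} • τ v :=
            sum_le_card_nsmul _ _ _ fun e he => (mem_filter.1 he).2
        _ ≤ k * τ v := by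
            rw [nsmul_eq_mul]
            gcongr
            · exact hτ_nonneg v
            · exact_mod_cast (card_filter_le _ _).trans (hT_card v)
    · refine sum_le_sum_of_subset_of_nonneg (fun e he => ?_) fun e _ _ => hw e
      simp only [mem_filter, mem_edgeFinset, not_le] at he
      rw [incidenceFinset_eq_filter]
      simp only [mem_filter, mem_edgeFinset]
      exact ⟨⟨he.1.1, he.1.2 ▸ hT_mem e he.1.1⟩, he.2⟩
  have heavy_le v : ∑ e ∈ G.incidenceFinset v with τ v < w e, w e ≤ G.weightedDegree w v / 4 := by
    rw [sum_filter, sum_incidenceFinset_eq_sum_neighborFinset, ← sum_filter]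
    exact (hτ v).2
  have handshake : ∑ v, G.weightedDegree w v = 2 * ∑ e ∈ G.edgeFinset, w e := by
    simp only [weightedDegree, ← sum_incidenceFinset_eq_sum_neighborFinset,
      sum_sum_incidenceFinset_eq_two_nsmul, nsmul_eq_mul, Nat.cast_ofNat]
  have := calc ∑ e ∈ G.edgeFinset, w e
      = ∑ v, ∑ e ∈ G.edgeFinset with T e = v, w e := (sum_fiberwise _ _ _).symm
    _ ≤ ∑ v, (k * τ v + G.weightedDegree w v / 4) :=
        sum_le_sum fun v _ => (tail_le v).trans (by linarith [heavy_le v])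
    _ = k * ∑ v, τ v + (∑ e ∈ G.edgeFinset, w e) / 2 := by
        rw [sum_add_distrib, ← mul_sum, ← sum_div, handshake]
        ring
  linarith

end SimpleGraph

section Draws

variable {V : Type} [Fintype V] (G : SimpleGraph V) [DecidableRel G.Adj] (w : Sym2 V → ℝ)
  (s : ℕ)

/-- The probability of an outcome in `drawSupport` under `drawSpace`. -/
noncomputable def drawMass (ω : Fin s × V → V) : ℝ :=
  ∏ c, w s(c.2, ω c) / G.weightedDegree w c.2

def drawSupport [DecidableEq V] : Finset (Fin s × V → V) :=
  Fintype.piFinset fun c => G.neighborFinset c.2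

variable {G w s}

theorem drawMass_nonneg (hw : ∀ e, 0 ≤ w e) (hdeg : ∀ v, 0 < G.weightedDegree w v)
    (ω : Fin s × V → V) : 0 ≤ drawMass G w s ω :=
  prod_nonneg fun c _ => div_nonneg (hw _) (hdeg c.2).le

variable [DecidableEq V]

theorem sum_drawMass (hdeg : ∀ v, 0 < G.weightedDegree w v) :
    ∑ ω ∈ drawSupport G s, drawMass G w s ω = 1 := by
  unfold drawSupport drawMass
  rw [← prod_univ_sum (fun c : Fin s × V => G.neighborFinset c.2)
    fun c u => w s(c.2, u) / G.weightedDegree w c.2]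
  exact prod_eq_one fun c _ => G.sum_div_weightedDegree_eq_one (hdeg c.2)

theorem sum_drawMass_filter_forall_lt (hdeg : ∀ v, 0 < G.weightedDegree w v) (v : V) (τ : ℝ) :
    ∑ ω ∈ drawSupport G s with ∀ i, w s(v, ω (i, v)) < τ, drawMass G w s ω =
      (∑ u ∈ G.neighborFinset v with w s(v, u) < τ, w s(v, u) / G.weightedDegree w v) ^ s := by
  have h_event (ω : Fin s × V → V) :
      (∀ i, w s(v, ω (i, v)) < τ) ↔ ∀ c : Fin s × V, c.2 = v → w s(v, ω c) < τ :=
    ⟨fun h ⟨i, _⟩ hc => hc ▸ h i, fun h i => h (i, v) rfl⟩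
  unfold drawSupport drawMass
  rw [filter_congr fun ω _ => h_event ω,
    sum_filter_piFinset_forall_prod (fun c : Fin s × V => G.neighborFinset c.2)
    (fun c u => c.2 = v → w s(v, u) < τ) fun c u => w s(c.2, u) / G.weightedDegree w c.2,
    Fintype.prod_prod_type]
  have h_factor (v' : V) :
      ∑ u ∈ G.neighborFinset v' with v' = v → w s(v, u) < τ, w s(v', u) / G.weightedDegree w v' =
        if v' = v then
          ∑ u ∈ G.neighborFinset v with w s(v, u) < τ, w s(v, u) / G.weightedDegree w v
        else 1 := by
    split_ifs with h
    · subst h; simp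
    · simp [h, G.sum_div_weightedDegree_eq_one (hdeg v')]
  simp only [h_factor, prod_ite_eq', mem_univ, if_true, prod_const, card_univ, Fintype.card_fin]

theorem sum_drawMass_filter_forall_lt_le (hw : ∀ e, 0 ≤ w e)
    (hdeg : ∀ v, 0 < G.weightedDegree w v) {v : V} {τ : ℝ} (hτ : G.IsQuarterThreshold w v τ) :
    ∑ ω ∈ drawSupport G s with ∀ i, w s(v, ω (i, v)) < τ, drawMass G w s ω ≤ (3 / 4) ^ s := by
  rw [sum_drawMass_filter_forall_lt hdeg, ← sum_div]
  refine pow_le_pow_left₀ (div_nonneg (sum_nonneg fun _ _ => hw _) (hdeg v).le) ?_ s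
  rw [div_le_iff₀ (hdeg v)]
  have h_split := sum_filter_add_sum_filter_not (G.neighborFinset v)
    (fun u => w s(v, u) < τ) fun u => w s(v, u)
  simp only [not_lt] at h_split
  have h_deg : G.weightedDegree w v = ∑ u ∈ G.neighborFinset v, w s(v, u) := rfl
  linarith [hτ.1]

theorem sum_drawMass_filter_half_lt_le (hw : ∀ e, 0 ≤ w e)
    (hdeg : ∀ v, 0 < G.weightedDegree w v) {τ : V → ℝ} (hτ_nonneg : ∀ v, 0 ≤ τ v)
    (hτ : ∀ v, G.IsQuarterThreshold w v (τ v)) :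
    ∑ ω ∈ drawSupport G s with
        (∑ v, τ v) / 2 < ∑ v with ∀ i, w s(v, ω (i, v)) < τ v, τ v, drawMass G w s ω ≤
      2 * (3 / 4) ^ s := by
  rcases (sum_nonneg fun v _ => hτ_nonneg v : 0 ≤ ∑ v, τ v).eq_or_lt with h_zero | h_pos
  · rw [sum_eq_zero fun ω hω => absurd (mem_filter.1 hω).2 ?_]
    · positivity
    rw [← h_zero, not_lt, zero_div]
    exact (sum_le_sum_of_subset_of_nonneg (filter_subset _ _) fun v _ _ => hτ_nonneg v).trans
      h_zero.ge
  · refine le_of_mul_le_mul_left ?_ h_pos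
    have h_markov := mul_sum_filter_lt_le_sum_mul_sum_filter (drawSupport G s) univ
      (fun v ω => ∀ i, w s(v, ω (i, v)) < τ v) (fun ω _ => drawMass_nonneg hw hdeg ω)
      (fun v _ => hτ_nonneg v) ((∑ v, τ v) / 2)
    have h_each : ∑ v, τ v * ∑ ω ∈ drawSupport G s with ∀ i, w s(v, ω (i, v)) < τ v,
        drawMass G w s ω ≤ ∑ v, τ v * (3 / 4) ^ s :=
      sum_le_sum fun v _ =>
        mul_le_mul_of_nonneg_left (sum_drawMass_filter_forall_lt_le hw hdeg (hτ v)) (hτ_nonneg v)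
    rw [← sum_mul] at h_each
    linarith

theorem one_sub_two_mul_pow_le_sum_drawMass_filter (hw : ∀ e, 0 ≤ w e)
    (hdeg : ∀ v, 0 < G.weightedDegree w v) {τ : V → ℝ} (hτ_nonneg : ∀ v, 0 ≤ τ v)
    (hτ : ∀ v, G.IsQuarterThreshold w v (τ v)) :
    1 - 2 * (3 / 4) ^ s ≤ ∑ ω ∈ drawSupport G s with
        ∑ v with ∀ i, w s(v, ω (i, v)) < τ v, τ v ≤ (∑ v, τ v) / 2, drawMass G w s ω := by
  have h_split := sum_filter_add_sum_filter_not (drawSupport G s)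
    (fun ω => (∑ v, τ v) / 2 < ∑ v with ∀ i, w s(v, ω (i, v)) < τ v, τ v) (drawMass G w s)
  simp only [sum_drawMass hdeg, not_lt] at h_split
  linarith [sum_drawMass_filter_half_lt_le (s := s) hw hdeg hτ_nonneg hτ]

theorem ofReal_sum_drawMass_le_drawSpace [MeasurableSpace V] (hw : ∀ e, 0 ≤ w e)
    (hdeg : ∀ v, 0 < G.weightedDegree w v) (P : (Fin s × V → V) → Prop) [DecidablePred P]
    {A : Set (Fin s × V → V)} (hPA : ∀ ω ∈ drawSupport G s, P ω → ω ∈ A) :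
    ENNReal.ofReal (∑ ω ∈ drawSupport G s with P ω, drawMass G w s ω) ≤ drawSpace G w s A := by
  classical
  calc ENNReal.ofReal (∑ ω ∈ drawSupport G s with P ω, drawMass G w s ω)
      ≤ ENNReal.ofReal (∑ ω ∈ drawSupport G s with ω ∈ A, drawMass G w s ω) := by
        refine ENNReal.ofReal_le_ofReal (sum_le_sum_of_subset_of_nonneg (fun ω hω => ?_)
          fun ω _ _ => drawMass_nonneg hw hdeg ω)
        rw [mem_filter] at hω ⊢
        exact ⟨hω.1, hPA ω hω.1 hω.2⟩
    _ = ∑ ω ∈ drawSupport G s with ω ∈ A,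
          ∏ c, ENNReal.ofReal (w s(c.2, ω c) / G.weightedDegree w c.2) := by
        rw [ENNReal.ofReal_sum_of_nonneg fun ω _ => drawMass_nonneg hw hdeg ω]
        exact sum_congr rfl fun ω _ =>
          ENNReal.ofReal_prod_of_nonneg fun c _ => div_nonneg (hw _) (hdeg c.2).le
    _ ≤ drawSpace G w s A :=
        Measure.sum_filter_prod_le_pi_apply (μ := fun c : Fin s × V => drawM G w c.2)
          (fun c : Fin s × V => G.neighborFinset c.2)
          (fun c u => ENNReal.ofReal (w s(c.2, u) / G.weightedDegree w c.2)) (fun c => rfl) A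

theorem sum_sub_sum_filter_le_two_mul_sum_kept (hw : ∀ e, 0 ≤ w e) {ω : Fin s × V → V}
    (hω : ω ∈ drawSupport G s) (τ : V → ℝ) {sel : V → Sym2 V}
    (hsel : ∀ v, (∃ i : Fin s, sel v = s(v, ω (i, v))) ∧
      ∀ i : Fin s, w s(v, ω (i, v)) ≤ w (sel v)) :
    ∑ v, τ v - ∑ v with ∀ i, w s(v, ω (i, v)) < τ v, τ v ≤
      2 * ∑ e ∈ G.edgeFinset with ∃ v, sel v = e, w e := by
  have h_kept : {e ∈ G.edgeFinset | ∃ v, sel v = e} = univ.image sel := by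
    ext e
    simp only [mem_filter, mem_image, mem_univ, true_and, and_iff_right_iff_imp]
    rintro ⟨v, rfl⟩
    obtain ⟨i, hi⟩ := (hsel v).1
    rw [hi, SimpleGraph.mem_edgeFinset, SimpleGraph.mem_edgeSet,
      ← SimpleGraph.mem_neighborFinset]
    exact Fintype.mem_piFinset.1 hω (i, v)
  rw [h_kept, ← sum_filter_add_sum_filter_not univ fun v => ∀ i, w s(v, ω (i, v)) < τ v,
    add_sub_cancel_left]
  calc ∑ v with ¬∀ i, w s(v, ω (i, v)) < τ v, τ v
      ≤ ∑ v with ¬∀ i, w s(v, ω (i, v)) < τ v, w (sel v) := sum_le_sum fun v hv => by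
        obtain ⟨i, hi⟩ := not_forall.1 (mem_filter.1 hv).2
        exact (not_lt.1 hi).trans ((hsel v).2 i)
    _ ≤ ∑ v, w (sel v) :=
        sum_le_sum_of_subset_of_nonneg (filter_subset _ _) fun _ _ _ => hw _
    _ ≤ 2 * ∑ e ∈ univ.image sel, w e := by
        refine sum_le_two_mul_sum_image sel (fun v => ?_) hw
        obtain ⟨i, hi⟩ := (hsel v).1
        exact hi ▸ Sym2.mem_mk_left _ _

end Draws

open Classical in
/-- If each vertex of a weighted graph of arboricity at most `α` independently
draws an incident edge with probability proportional to its weight,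
`s = Θ(log(1/δ))` times, and keeps a maximum-weight drawn edge, then with
probability at least `1 - δ` the total weight of the kept edges is at least
`w(G)/(16α)`. -/
theorem weighted_edge_selection :
    ∃ C : ℝ, 0 < C ∧
      ∀ (V : Type) [Fintype V] [DecidableEq V] [MeasurableSpace V]
        (G : SimpleGraph V) [DecidableRel G.Adj]
        (α : ℕ), 1 ≤ α →
        ∀ w : Sym2 V → ℝ, (∀ e, 0 ≤ w e) →
        G.HasArboricityLE α →
        (∀ v : V, 0 < ∑ x ∈ G.neighborFinset v, w s(v, x)) →
        ∀ δ : ℝ, 0 < δ → δ < 1 →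
        ∀ s : ℕ, C * (Real.log (1 / δ) + 1) ≤ (s : ℝ) →
        ENNReal.ofReal (1 - δ) ≤
          drawSpace G w s
            {ω | ∀ sel : V → Sym2 V,
              (∀ v, (∃ i : Fin s, sel v = s(v, ω (i, v))) ∧
                ∀ i : Fin s, w s(v, ω (i, v)) ≤ w (sel v)) →
              (∑ e ∈ G.edgeFinset, w e) / (16 * α) ≤
                ∑ e ∈ G.edgeFinset.filter (fun e => ∃ v, sel v = e), w e} := by
  refine ⟨4, by norm_num, fun V _ _ _ G _ α hα w hw hG hdeg δ hδ _ s hs => ?_⟩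
  choose τ hτ_nonneg hτ using fun v => G.exists_isQuarterThreshold hw (hdeg v)
  have h_total := hG.sum_edgeFinset_le_two_mul_mul_sum hw hτ_nonneg hτ
  have h_prob := (one_sub_two_mul_pow_le_sum_drawMass_filter (s := s) hw hdeg hτ_nonneg hτ).trans'
    (by linarith [two_mul_three_quarters_pow_le hδ hs] : 1 - δ ≤ 1 - 2 * (3 / 4) ^ s)
  refine (ENNReal.ofReal_le_ofReal h_prob).trans (ofReal_sum_drawMass_le_drawSpace hw hdeg _
    fun ω hω h_good sel hsel => ?_)
  have h_tau : ∑ v, τ v ≤ 4 * ∑ e ∈ G.edgeFinset with ∃ v, sel v = e, w e := by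
    linarith [sum_sub_sum_filter_le_two_mul_sum_kept hw hω τ hsel]
  rw [div_le_iff₀ (by positivity)]
  nlinarith [sum_nonneg fun e (_ : e ∈ G.edgeFinset.filter fun e => ∃ v, sel v = e) => hw e]
end

section
/- Let F be a directed pseudo-forest (each vertex has out-degree at most 1) with a proper 3-coloring χ of its vertices. Mark edges by the rule: each vertex u with χ(u)=1 marks either its single outgoing edge (if its weight is at least the total weight of u's incoming edges) or else all its incoming edges; each vertex u with χ(u)=2 applies the same rule restricted to edges whose other endpoint is colored 3. Then the subgraph of marked edges contains no cycle, i.e., it is a forest. -/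
/-- Total weight of the incoming edges of `v` in the functional digraph `out`
(the edge with tail `x` has weight `w x`). -/
noncomputable def inW {V : Type} [Fintype V] [DecidableEq V]
    (out : V → Option V) (w : V → ℝ) (v : V) : ℝ :=
  ∑ x ∈ Finset.univ.filter (fun x => out x = some v), w x

/-- Total weight of the incoming edges of `v` whose tail is colored `3`. -/
noncomputable def inW3 {V : Type} [Fintype V] [DecidableEq V]
    (out : V → Option V) (w : V → ℝ) (χ : V → ℕ) (v : V) : ℝ :=
  ∑ x ∈ Finset.univ.filter (fun x => out x = some v ∧ χ x = 3), w x

/-- The directed edge `(u,v)` (with `out u = some v`, weight `w u`) is marked: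
a vertex colored `1` marks its outgoing edge if its weight is at least the
total weight of its incoming edges, and otherwise marks all its incoming
edges; a vertex colored `2` applies the same rule restricted to edges whose
other endpoint is colored `3`. -/
def Marked {V : Type} [Fintype V] [DecidableEq V]
    (out : V → Option V) (w : V → ℝ) (χ : V → ℕ) (u v : V) : Prop :=
  (χ u = 1 ∧ inW out w u ≤ w u) ∨
  (χ v = 1 ∧ ¬ ((out v).isSome = true ∧ inW out w v ≤ w v)) ∨
  (χ u = 2 ∧ χ v = 3 ∧ inW3 out w χ u ≤ w u) ∨
  (χ v = 2 ∧ χ u = 3 ∧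
    ¬ ∃ z, out v = some z ∧ χ z = 3 ∧ inW3 out w χ v ≤ w v)

/-!
Orient each marked edge from `u` to `out u`. Because out-degrees are at most one, an undirected
cycle of such edges is a directed cycle: of the two cycle edges at a vertex at most one leaves it,
so the other enters it, and the resulting predecessor map on the cycle is injective, hence onto,
so every vertex of the cycle also has a cycle edge leaving it. A vertex colored `1` never has both
a marked outgoing and a marked incoming edge, so the cycle alternates between colors `2` and `3`;
but a vertex colored `2` never has both towards vertices colored `3` either.
-/

namespace SimpleGraph

theorem fromEdgeSet_setOf_mk_eq_fromRel {V : Type*} (r : V → V → Prop) :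
    fromEdgeSet {e | ∃ u v, e = s(u, v) ∧ r u v} = fromRel r := by
  ext x y
  simp only [fromEdgeSet_adj, Set.mem_ofPred_eq, fromRel_adj, Sym2.eq_iff]
  constructor
  · rintro ⟨⟨u, v, ⟨rfl, rfl⟩ | ⟨rfl, rfl⟩, h⟩, hne⟩ <;> simp_all
  · rintro ⟨hne, h | h⟩
    · exact ⟨⟨x, y, by simp, h⟩, hne⟩
    · exact ⟨⟨y, x, by simp, h⟩, hne⟩

namespace Walk.IsCycle

variable {V : Type*} {r : V → V → Prop} {a u : V} {p : (fromRel r).Walk a a}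

theorem exists_rel_to_of_rightUnique (hp : p.IsCycle) (hr : Relator.RightUnique r)
    (hu : u ∈ p.support) : ∃ t ∈ p.support, r t u := by
  obtain ⟨b, c, hbc, hnbr⟩ := Set.ncard_eq_two.mp (hp.ncard_neighborSet_toSubgraph_eq_two hu)
  have hb : p.toSubgraph.Adj u b := by simp [← Subgraph.mem_neighborSet, hnbr]
  have hc : p.toSubgraph.Adj u c := by simp [← Subgraph.mem_neighborSet, hnbr]
  rcases ((fromRel_adj _ _ _).mp hb.adj_sub).2 with hub | hbu
  · rcases ((fromRel_adj _ _ _).mp hc.adj_sub).2 with huc | hcu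
    · exact absurd (hr hub huc) hbc
    · exact ⟨c, Walk.mem_support_of_adj_toSubgraph hc.symm, hcu⟩
  · exact ⟨b, Walk.mem_support_of_adj_toSubgraph hb.symm, hbu⟩

theorem exists_rel_from_of_rightUnique (hp : p.IsCycle) (hr : Relator.RightUnique r)
    (hu : u ∈ p.support) : ∃ v ∈ p.support, r u v := by
  choose! pred hpred_mem hpred using fun x (hx : x ∈ p.support) =>
    hp.exists_rel_to_of_rightUnique hr hx
  have hinj : Set.InjOn pred {x | x ∈ p.support} := fun x hx y hy hxy =>
    hr (hpred x hx) (hxy ▸ hpred y hy)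
  have hbij := (p.support.finite_toSet.injOn_iff_bijOn_of_mapsTo hpred_mem).mp hinj
  obtain ⟨v, hv, rfl⟩ := hbij.surjOn hu
  exact ⟨v, hv, hpred v hv⟩

end Walk.IsCycle

end SimpleGraph

section Marking

variable {V : Type} [Fintype V] [DecidableEq V] {out : V → Option V} {w : V → ℝ} {χ : V → ℕ}
  {t u v : V}

theorem not_marked_out_and_in_of_eq_one (hu : χ u = 1) (hv : χ v ≠ 1) (ht : χ t ≠ 1)
    (huv : out u = some v) (hmuv : Marked out w χ u v) (hmtu : Marked out w χ t u) : False := by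
  have hle : inW out w u ≤ w u := by
    rcases hmuv with ⟨-, h⟩ | ⟨h, -⟩ | ⟨h, -⟩ | ⟨-, h, -⟩ <;> simp_all
  rcases hmtu with ⟨h, -⟩ | ⟨-, h⟩ | ⟨-, h, -⟩ | ⟨h, -⟩ <;> simp_all

theorem not_marked_out_and_in_of_eq_two (hu : χ u = 2) (hv : χ v = 3) (ht : χ t = 3)
    (huv : out u = some v) (hmuv : Marked out w χ u v) (hmtu : Marked out w χ t u) : False := by
  have hle : inW3 out w χ u ≤ w u := by
    rcases hmuv with ⟨h, -⟩ | ⟨h, -⟩ | ⟨-, -, h⟩ | ⟨h, -⟩ <;> simp_all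
  rcases hmtu with ⟨h, -⟩ | ⟨h, -⟩ | ⟨h, -⟩ | ⟨-, -, h⟩ <;> simp_all

end Marking

/-- In a directed pseudo-forest with a proper 3-coloring, the subgraph of
marked edges is acyclic, i.e. a forest. -/
theorem marked_subgraph_isAcyclic {V : Type} [Fintype V] [DecidableEq V]
    (out : V → Option V) (w : V → ℝ) (χ : V → ℕ)
    (hχ : ∀ v, χ v = 1 ∨ χ v = 2 ∨ χ v = 3)
    (hproper : ∀ u v, out u = some v → χ u ≠ χ v) :
    (SimpleGraph.fromEdgeSet
      {e | ∃ u v, e = s(u, v) ∧ out u = some v ∧ Marked out w χ u v}).IsAcyclic := by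
  rw [SimpleGraph.fromEdgeSet_setOf_mk_eq_fromRel]
  intro a p hp
  have hr : Relator.RightUnique fun u v => out u = some v ∧ Marked out w χ u v :=
    fun _ _ _ h h' => Option.some_injective _ (h.1.symm.trans h'.1)
  have hno1 : ∀ u ∈ p.support, χ u ≠ 1 := by
    intro u hu h1
    obtain ⟨v, -, huv, hmuv⟩ := hp.exists_rel_from_of_rightUnique hr hu
    obtain ⟨t, -, htu, hmtu⟩ := hp.exists_rel_to_of_rightUnique hr hu
    exact not_marked_out_and_in_of_eq_one h1 (h1 ▸ hproper u v huv).symm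
      (h1 ▸ hproper t u htu) huv hmuv hmtu
  have h23 : ∀ u ∈ p.support, χ u = 2 ∨ χ u = 3 := fun u hu => (hχ u).resolve_left (hno1 u hu)
  have hsum : ∀ x ∈ p.support, ∀ y ∈ p.support, out x = some y → χ x + χ y = 5 := by
    intro x hx y hy hxy
    have := h23 x hx
    have := h23 y hy
    have := hproper x y hxy
    omega
  obtain ⟨u, hu, hu2⟩ : ∃ u ∈ p.support, χ u = 2 := by
    obtain ⟨v, hv, hav, -⟩ := hp.exists_rel_from_of_rightUnique hr p.start_mem_support
    have := hsum a p.start_mem_support v hv hav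
    rcases h23 a p.start_mem_support with ha | ha
    · exact ⟨a, p.start_mem_support, ha⟩
    · exact ⟨v, hv, by omega⟩
  obtain ⟨v, hv, huv, hmuv⟩ := hp.exists_rel_from_of_rightUnique hr hu
  obtain ⟨t, ht, htu, hmtu⟩ := hp.exists_rel_to_of_rightUnique hr hu
  have := hsum u hu v hv huv
  have := hsum t ht u hu htu
  exact not_marked_out_and_in_of_eq_two hu2 (by omega) (by omega) huv hmuv hmtu
end

section
/- In the shallow-subtree selection step applied to a weighted forest F (from Czygrinow–Hańćkowiak–Wawrzyniak), the set T of subtrees induced by the marked edges satisfies w(T) ≥ w(F)/2, and every tree in T has height at most 10. Consequently, contracting in each tree T ∈ T either all its even-level-to-odd-level edges or all remaining edges (whichever set is heavier) contracts edges of total weight at least w(F)/4. -/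
theorem Finset.sum_le_two_mul_sum_of_subset_insert {ι : Type*} [DecidableEq ι] {w : ι → ℝ}
    (hw : ∀ i, 0 ≤ w i) {s m c : Finset ι} {z : ι} (hs : s ⊆ insert z c)
    (hm : (z ∈ m ∧ ∑ i ∈ c, w i ≤ w z) ∨ (c ⊆ m ∧ (z ∈ s → w z ≤ ∑ i ∈ c, w i))) :
    ∑ i ∈ s, w i ≤ 2 * ∑ i ∈ m, w i := by
  have hs_le : ∑ i ∈ s, w i ≤ w z + ∑ i ∈ c, w i := by
    refine (Finset.sum_le_sum_of_subset_of_nonneg hs fun i _ _ => hw i).trans ?_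
    by_cases hz : z ∈ c
    · rw [Finset.insert_eq_of_mem hz]; linarith [hw z]
    · rw [Finset.sum_insert hz]
  rcases hm with ⟨hzm, hc⟩ | ⟨hcm, hz⟩
  · linarith [Finset.single_le_sum (fun i _ => hw i) hzm]
  · have hc : ∑ i ∈ c, w i ≤ ∑ i ∈ m, w i :=
      Finset.sum_le_sum_of_subset_of_nonneg hcm fun i _ _ => hw i
    by_cases hzs : z ∈ s
    · linarith [hz hzs]
    · have hsc : s ⊆ c := fun i hi =>
        (Finset.mem_insert.mp (hs hi)).resolve_left fun h => hzs (h ▸ hi)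
      linarith [Finset.sum_le_sum_of_subset_of_nonneg hsc fun i _ _ => hw i,
        Finset.sum_nonneg fun i (_ : i ∈ m) => hw i]

theorem Finset.sum_le_two_mul_sum_max_filter {α β : Type*} [Fintype β] [DecidableEq β]
    (s : Finset α) (g : α → β) (p : α → Prop) [DecidablePred p] (f : α → ℝ) :
    ∑ x ∈ s, f x ≤ 2 * ∑ r, max (∑ x ∈ s with g x = r ∧ p x, f x)
      (∑ x ∈ s with g x = r ∧ ¬ p x, f x) := by
  rw [← Finset.sum_fiberwise s g f, Finset.mul_sum]
  refine Finset.sum_le_sum fun r _ => ?_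
  rw [← Finset.sum_filter_add_sum_filter_not _ p, Finset.filter_filter, Finset.filter_filter,
    two_mul]
  exact add_le_add (le_max_left _ _) (le_max_right _ _)

section Marked

variable {V : Type} [Fintype V] [DecidableEq V] {parent : V → Option V} {w : V → ℝ} {χ : V → ℕ}

theorem color_ne_one_of_marked_of_marked (hproper : ∀ u v, parent u = some v → χ u ≠ χ v)
    {a b c : V} (hab : parent a = some b) (hbc : parent b = some c)
    (mab : Marked parent w χ a b) (mbc : Marked parent w χ b c) : χ b ≠ 1 := by
  intro hb
  have hb_up : inW parent w b ≤ w b := by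
    rcases mbc with ⟨_, h⟩ | ⟨hc, _⟩ | ⟨h, _⟩ | ⟨_, h, _⟩
    · exact h
    · exact absurd (hb.trans hc.symm) (hproper b c hbc)
    all_goals omega
  rcases mab with ⟨ha, _⟩ | ⟨_, h⟩ | ⟨_, h, _⟩ | ⟨h, _⟩
  · exact hproper a b hab (ha.trans hb.symm)
  · exact h ⟨by simp [hbc], hb_up⟩
  all_goals omega

theorem colors_of_marked_of_ne_one {b c : V} (m : Marked parent w χ b c) (hb : χ b ≠ 1)
    (hc : χ c ≠ 1) : (χ b = 2 ∧ χ c = 3) ∨ (χ b = 3 ∧ χ c = 2) := by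
  rcases m with ⟨h, _⟩ | ⟨h, _⟩ | ⟨h2, h3, _⟩ | ⟨h2, h3, _⟩
  · exact absurd h hb
  · exact absurd h hc
  · exact Or.inl ⟨h2, h3⟩
  · exact Or.inr ⟨h3, h2⟩

theorem color_eq_one_of_marked_of_three_two {b c d : V} (hcd : parent c = some d)
    (mbc : Marked parent w χ b c) (mcd : Marked parent w χ c d) (hb : χ b = 3) (hc : χ c = 2) :
    χ d = 1 := by
  have hc_down : ¬ ∃ z, parent c = some z ∧ χ z = 3 ∧ inW3 parent w χ c ≤ w c := by
    rcases mbc with ⟨h, _⟩ | ⟨h, _⟩ | ⟨h, _⟩ | ⟨_, _, h⟩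
    · omega
    · omega
    · omega
    · exact h
  rcases mcd with ⟨h, _⟩ | ⟨h, _⟩ | ⟨_, hd, hle⟩ | ⟨h, _⟩
  · omega
  · exact h
  · exact absurd ⟨d, hcd, hd, hle⟩ hc_down
  · omega

theorem not_marked_path_five (hproper : ∀ u v, parent u = some v → χ u ≠ χ v)
    {u₀ u₁ u₂ u₃ u₄ u₅ : V}
    (h₁ : parent u₀ = some u₁) (m₁ : Marked parent w χ u₀ u₁)
    (h₂ : parent u₁ = some u₂) (m₂ : Marked parent w χ u₁ u₂)
    (h₃ : parent u₂ = some u₃) (m₃ : Marked parent w χ u₂ u₃)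
    (h₄ : parent u₃ = some u₄) (m₄ : Marked parent w χ u₃ u₄)
    (h₅ : parent u₄ = some u₅) (m₅ : Marked parent w χ u₄ u₅) : False := by
  have c₁ := color_ne_one_of_marked_of_marked hproper h₁ h₂ m₁ m₂
  have c₂ := color_ne_one_of_marked_of_marked hproper h₂ h₃ m₂ m₃
  have c₃ := color_ne_one_of_marked_of_marked hproper h₃ h₄ m₃ m₄
  have c₄ := color_ne_one_of_marked_of_marked hproper h₄ h₅ m₄ m₅
  rcases colors_of_marked_of_ne_one m₂ c₁ c₂ with ⟨-, h₂₃⟩ | ⟨h₁₃, h₂₂⟩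
  · rcases colors_of_marked_of_ne_one m₃ c₂ c₃ with ⟨h, -⟩ | ⟨-, h₃₂⟩
    · omega
    · exact c₄ (color_eq_one_of_marked_of_three_two h₄ m₃ m₄ h₂₃ h₃₂)
  · exact c₃ (color_eq_one_of_marked_of_three_two h₃ m₂ m₃ h₁₃ h₂₂)

theorem dep_le_four (hproper : ∀ u v, parent u = some v → χ u ≠ χ v) {dep : V → ℕ}
    (hdep1 : ∀ u v, parent u = some v → Marked parent w χ u v → dep u = dep v + 1)
    (hdep0 : ∀ u, (∀ v, parent u = some v → ¬ Marked parent w χ u v) → dep u = 0)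
    (u : V) : dep u ≤ 4 := by
  have marked_up : ∀ x, dep x ≠ 0 →
      ∃ y, parent x = some y ∧ Marked parent w χ x y ∧ dep x = dep y + 1 := by
    intro x hx
    by_contra! h
    exact hx (hdep0 x fun y hy hm => h y hy hm (hdep1 x y hy hm))
  by_contra! hu
  obtain ⟨u₁, h₁, m₁, e₁⟩ := marked_up u (by omega)
  obtain ⟨u₂, h₂, m₂, e₂⟩ := marked_up u₁ (by omega)
  obtain ⟨u₃, h₃, m₃, e₃⟩ := marked_up u₂ (by omega)
  obtain ⟨u₄, h₄, m₄, e₄⟩ := marked_up u₃ (by omega)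
  obtain ⟨u₅, h₅, m₅, -⟩ := marked_up u₄ (by omega)
  exact not_marked_path_five hproper h₁ m₁ h₂ m₂ h₃ m₃ h₄ m₄ h₅ m₅

end Marked

/-- The endpoint whose rule decides whether the edge from `u` to its parent is marked:
the endpoint colored `1` if there is one, otherwise the one colored `2`. -/
def responsible {V : Type} (parent : V → Option V) (χ : V → ℕ) (u : V) : V :=
  match parent u with
  | none => u
  | some v => if χ u = 1 then u else if χ v = 1 then v else if χ u = 2 then u else v

section Responsible

variable {V : Type} {parent : V → Option V} {χ : V → ℕ}

theorem responsible_of_parent_eq {u v : V} (h : parent u = some v) :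
    responsible parent χ u =
      if χ u = 1 then u else if χ v = 1 then v else if χ u = 2 then u else v := by
  simp only [responsible, h]

theorem responsible_eq_or_eq {u v : V} (h : parent u = some v) :
    responsible parent χ u = u ∨ responsible parent χ u = v := by
  rw [responsible_of_parent_eq h]
  split_ifs <;> simp

theorem color_responsible (hχ : ∀ v, χ v = 1 ∨ χ v = 2 ∨ χ v = 3)
    (hproper : ∀ u v, parent u = some v → χ u ≠ χ v) {u v : V} (h : parent u = some v) :
    χ (responsible parent χ u) = 1 ∨ χ (responsible parent χ u) = 2 := by
  have := hproper u v h
  rw [responsible_of_parent_eq h]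
  split_ifs <;> grind

theorem responsible_eq_of_color_two (hχ : ∀ v, χ v = 1 ∨ χ v = 2 ∨ χ v = 3)
    (hproper : ∀ u v, parent u = some v → χ u ≠ χ v) {u v z : V} (h : parent u = some v)
    (hz : χ z = 2) (hu : responsible parent χ u = z) :
    (u = z ∧ χ v = 3) ∨ (v = z ∧ χ u = 3) := by
  have := hproper u v h
  rw [responsible_of_parent_eq h] at hu
  split_ifs at hu <;> grind

variable [Fintype V] [DecidableEq V] {w : V → ℝ}

open Classical in
theorem sum_fiber_le_of_color_one (hw : ∀ v, 0 ≤ w v)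
    (hproper : ∀ u v, parent u = some v → χ u ≠ χ v) {z : V} (hz : χ z = 1) :
    ∑ u ∈ Finset.univ.filter (fun u => (parent u).isSome) with responsible parent χ u = z, w u ≤
      2 * ∑ u ∈ Finset.univ.filter (fun u => ∃ v, parent u = some v ∧ Marked parent w χ u v)
        with responsible parent χ u = z, w u := by
  have hchild {x : V} (hx : parent x = some z) : responsible parent χ x = z := by
    rw [responsible_of_parent_eq hx, if_neg (hz ▸ hproper x z hx), if_pos hz]
  refine Finset.sum_le_two_mul_sum_of_subset_insert hw
    (z := z) (c := Finset.univ.filter (parent · = some z)) ?_ ?_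
  · intro u hu
    simp only [Finset.mem_filter, Finset.mem_univ, true_and, Option.isSome_iff_exists] at hu
    obtain ⟨⟨v, hv⟩, hu⟩ := hu
    rcases responsible_eq_or_eq (χ := χ) hv with h | h
    · simp [← hu, h]
    · simp [← hu, h, hv]
  · by_cases hup : (parent z).isSome ∧ inW parent w z ≤ w z
    · obtain ⟨y, hy⟩ := Option.isSome_iff_exists.mp hup.1
      refine Or.inl ⟨?_, hup.2⟩
      simp only [Finset.mem_filter, Finset.mem_univ, true_and]
      exact ⟨⟨y, hy, Or.inl ⟨hz, hup.2⟩⟩, by rw [responsible_of_parent_eq hy, if_pos hz]⟩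
    · refine Or.inr ⟨fun x hx => ?_, fun hzs => ?_⟩
      · simp only [Finset.mem_filter, Finset.mem_univ, true_and] at hx ⊢
        exact ⟨⟨z, hx, Or.inr (Or.inl ⟨hz, hup⟩)⟩, hchild hx⟩
      · simp only [Finset.mem_filter, Finset.mem_univ, true_and] at hzs
        exact (not_le.mp fun h => hup ⟨hzs.1, h⟩).le


open Classical in
theorem sum_fiber_le_of_color_two (hw : ∀ v, 0 ≤ w v) (hχ : ∀ v, χ v = 1 ∨ χ v = 2 ∨ χ v = 3)
    (hproper : ∀ u v, parent u = some v → χ u ≠ χ v) {z : V} (hz : χ z = 2) :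
    ∑ u ∈ Finset.univ.filter (fun u => (parent u).isSome) with responsible parent χ u = z, w u ≤
      2 * ∑ u ∈ Finset.univ.filter (fun u => ∃ v, parent u = some v ∧ Marked parent w χ u v)
        with responsible parent χ u = z, w u := by
  refine Finset.sum_le_two_mul_sum_of_subset_insert hw
    (z := z) (c := Finset.univ.filter (fun x => parent x = some z ∧ χ x = 3)) ?_ ?_
  · intro u hu
    simp only [Finset.mem_filter, Finset.mem_univ, true_and, Option.isSome_iff_exists] at hu
    obtain ⟨⟨v, hv⟩, hu⟩ := hu
    rcases responsible_eq_of_color_two hχ hproper hv hz hu with ⟨rfl, -⟩ | ⟨rfl, hu3⟩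
    · exact Finset.mem_insert_self _ _
    · simp [hv, hu3]
  · by_cases hup : ∃ y, parent z = some y ∧ χ y = 3 ∧ inW3 parent w χ z ≤ w z
    · obtain ⟨y, hy, hy3, hle⟩ := hup
      refine Or.inl ⟨?_, hle⟩
      simp only [Finset.mem_filter, Finset.mem_univ, true_and]
      refine ⟨⟨y, hy, Or.inr (Or.inr (Or.inl ⟨hz, hy3, hle⟩))⟩, ?_⟩
      rw [responsible_of_parent_eq hy, if_neg (by omega), if_neg (by omega), if_pos hz]
    · refine Or.inr ⟨fun x hx => ?_, fun hzs => ?_⟩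
      · simp only [Finset.mem_filter, Finset.mem_univ, true_and] at hx ⊢
        refine ⟨⟨z, hx.1, Or.inr (Or.inr (Or.inr ⟨hz, hx.2, hup⟩))⟩, ?_⟩
        rw [responsible_of_parent_eq hx.1, if_neg (by omega), if_neg (by omega), if_neg (by omega)]
      · simp only [Finset.mem_filter, Finset.mem_univ, true_and,
          Option.isSome_iff_exists] at hzs
        obtain ⟨⟨y, hy⟩, hzz⟩ := hzs
        have hy3 : χ y = 3 := by
          rcases responsible_eq_of_color_two hχ hproper hy hz hzz with ⟨-, h⟩ | ⟨-, h⟩ <;> omega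
        exact (not_le.mp fun h => hup ⟨y, hy, hy3, h⟩).le

open Classical in
theorem sum_le_two_mul_sum_marked (hw : ∀ v, 0 ≤ w v) (hχ : ∀ v, χ v = 1 ∨ χ v = 2 ∨ χ v = 3)
    (hproper : ∀ u v, parent u = some v → χ u ≠ χ v) :
    ∑ u ∈ Finset.univ.filter (fun u => (parent u).isSome), w u ≤
      2 * ∑ u ∈ Finset.univ.filter (fun u => ∃ v, parent u = some v ∧ Marked parent w χ u v),
        w u := by
  rw [← Finset.sum_fiberwise _ (responsible parent χ) w,
    ← Finset.sum_fiberwise _ (responsible parent χ) w, Finset.mul_sum]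
  refine Finset.sum_le_sum fun z _ => ?_
  rcases hχ z with hz | hz | hz
  · exact sum_fiber_le_of_color_one hw hproper hz
  · exact sum_fiber_le_of_color_two hw hχ hproper hz
  · rw [Finset.sum_eq_zero]
    · exact mul_nonneg zero_le_two (Finset.sum_nonneg fun u _ => hw u)
    intro u hu
    simp only [Finset.mem_filter, Finset.mem_univ, true_and, Option.isSome_iff_exists] at hu
    obtain ⟨⟨v, hv⟩, rfl⟩ := hu
    have := color_responsible hχ hproper hv
    omega

end Responsible

open Classical in
theorem shallow_subtree_selection_general {V : Type} [Fintype V] [DecidableEq V]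
    (parent : V → Option V) (w : V → ℝ) (hw : ∀ v, 0 ≤ w v)
    (χ : V → ℕ) (hχ : ∀ v, χ v = 1 ∨ χ v = 2 ∨ χ v = 3)
    (hproper : ∀ u v, parent u = some v → χ u ≠ χ v)
    (dep : V → ℕ)
    (hdep1 : ∀ u v, parent u = some v → Marked parent w χ u v →
      dep u = dep v + 1)
    (hdep0 : ∀ u, (∀ v, parent u = some v → ¬ Marked parent w χ u v) →
      dep u = 0)
    (rt : V → V) :
    ((∑ u ∈ Finset.univ.filter (fun u => (parent u).isSome), w u) / 2 ≤
      ∑ u ∈ Finset.univ.filter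
          (fun u => ∃ v, parent u = some v ∧ Marked parent w χ u v), w u) ∧
    (∀ u, dep u ≤ 10) ∧
    ((∑ u ∈ Finset.univ.filter (fun u => (parent u).isSome), w u) / 4 ≤
      ∑ r : V, max
        (∑ u ∈ Finset.univ.filter (fun u =>
            (∃ v, parent u = some v ∧ Marked parent w χ u v) ∧
            rt u = r ∧ Even (dep u)), w u)
        (∑ u ∈ Finset.univ.filter (fun u =>
            (∃ v, parent u = some v ∧ Marked parent w χ u v) ∧
            rt u = r ∧ ¬ Even (dep u)), w u)) := by
  have hmarked := sum_le_two_mul_sum_marked hw hχ hproper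
  have hsplit := Finset.sum_le_two_mul_sum_max_filter
    (Finset.univ.filter fun u => ∃ v, parent u = some v ∧ Marked parent w χ u v) rt
    (fun u => Even (dep u)) w
  simp only [Finset.filter_filter] at hsplit
  exact ⟨by linarith, fun u => (dep_le_four hproper hdep1 hdep0 u).trans (by norm_num),
    by linarith⟩

open Classical in
/-- The shallow-subtree selection step (Czygrinow–Hańćkowiak–Wawrzyniak) on a
weighted rooted forest `parent` with edge weights `w` and a proper 3-coloring
`χ`: the marked edges have total weight at least `w(F)/2`; each marked subtree
has height at most `10` (`dep` is the depth in the marked subtree, `rt` its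
root); and contracting, in each marked subtree, the heavier of the class of
even-to-odd-level edges and the class of the remaining edges, contracts edges
of total weight at least `w(F)/4`. -/
theorem shallow_subtree_selection {V : Type} [Fintype V] [DecidableEq V]
    (parent : V → Option V) (w : V → ℝ) (hw : ∀ v, 0 ≤ w v)
    (χ : V → ℕ) (hχ : ∀ v, χ v = 1 ∨ χ v = 2 ∨ χ v = 3)
    (hproper : ∀ u v, parent u = some v → χ u ≠ χ v)
    (hforest : ∀ v, ¬ Relation.TransGen (fun a b => parent a = some b) v v)
    (dep : V → ℕ)
    (hdep1 : ∀ u v, parent u = some v → Marked parent w χ u v →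
      dep u = dep v + 1)
    (hdep0 : ∀ u, (∀ v, parent u = some v → ¬ Marked parent w χ u v) →
      dep u = 0)
    (rt : V → V)
    (hrt1 : ∀ u v, parent u = some v → Marked parent w χ u v → rt u = rt v)
    (hrt0 : ∀ u, (∀ v, parent u = some v → ¬ Marked parent w χ u v) →
      rt u = u) :
    ((∑ u ∈ Finset.univ.filter (fun u => (parent u).isSome), w u) / 2 ≤
      ∑ u ∈ Finset.univ.filter
          (fun u => ∃ v, parent u = some v ∧ Marked parent w χ u v), w u) ∧
    (∀ u, dep u ≤ 10) ∧
    ((∑ u ∈ Finset.univ.filter (fun u => (parent u).isSome), w u) / 4 ≤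
      ∑ r : V, max
        (∑ u ∈ Finset.univ.filter (fun u =>
            (∃ v, parent u = some v ∧ Marked parent w χ u v) ∧
            rt u = r ∧ Even (dep u)), w u)
        (∑ u ∈ Finset.univ.filter (fun u =>
            (∃ v, parent u = some v ∧ Marked parent w χ u v) ∧
            rt u = r ∧ ¬ Even (dep u)), w u)) :=
  shallow_subtree_selection_general parent w hw χ hχ hproper dep hdep1 hdep0 rt
end
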